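/- arXiv:2105.00415 — 7 statements merged into one kernel-verified Lean document; each statement's English description precedes it below -/
import Mathlib

section
/- The equation 5^x - 2^y = 3 has exactly one solution in non-negative integers, namely (x, y) = (1, 1). -/
/-! Modulo 4 the equation reads 1 - 2^y ≡ 3, so 2^y ≡ 2 and hence y = 1; then 5^x = 5. -/

lemma two_pow_emod_four_eq_two_iff (y : ℕ) : (2 : ℤ) ^ y % 4 = 2 ↔ y = 1 := by
  match y with
  | 0 => decide
  | 1 => decide
  | y + 2 =>
    have hdvd : (4 : ℤ) ∣ 2 ^ (y + 2) := ⟨2 ^ y, by ring⟩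
    simp only [Int.emod_eq_zero_of_dvd hdvd]
    omega

lemma five_pow_emod_four (x : ℕ) : (5 : ℤ) ^ x % 4 = 1 := by
  simpa [Int.ModEq] using Int.ModEq.pow x (show (5 : ℤ) ≡ 1 [ZMOD 4] by decide)

theorem five_pow_sub_two_pow_eq_three (x y : ℕ) :
    (5:ℤ)^x - 2^y = 3 ↔ x = 1 ∧ y = 1 := by
  constructor
  · intro h
    have hy : y = 1 := by
      rw [← two_pow_emod_four_eq_two_iff]
      have := five_pow_emod_four x
      omega
    subst hy
    have hx : (5 : ℤ) ^ x = 5 ^ 1 := by linarith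
    exact ⟨pow_right_injective₀ (by norm_num) (by norm_num) hx, rfl⟩
  · rintro ⟨rfl, rfl⟩
    norm_num
end

section
/- The set of solutions in non-negative integers of the congruence 5^x - 2^y ≡ 3 (mod 100) equals the set of solutions of the equation 5^x - 2^y = 3 over the integers, namely {(1,1)}. -/
/-! Modulo 4 the congruence reads 2^y ≡ 2, forcing y = 1; modulo 25 it then reads 5^x ≡ 5,
forcing x = 1. Both steps are instances of: p^2 ∣ p^n - p only for n = 1. -/

theorem sq_dvd_pow_sub_self_iff {p : ℤ} (hp : 1 < p) (n : ℕ) : p ^ 2 ∣ p ^ n - p ↔ n = 1 := by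
  refine ⟨fun h => ?_, fun h => by simp [h]⟩
  match n, h with
  | 0, h =>
    have hdvd : p ^ 2 ∣ p - 1 := by rwa [← dvd_neg, neg_sub, ← pow_zero p]
    have := Int.le_of_dvd (by linarith) hdvd
    nlinarith
  | 1, _ => rfl
  | n + 2, h =>
    have hdvd : p ^ 2 ∣ p := (dvd_sub_right (pow_dvd_pow p (by omega))).mp h
    have := Int.le_of_dvd (by linarith) hdvd
    nlinarith

theorem eq_one_of_four_dvd_five_pow_sub_two_pow_sub_three {x y : ℕ}
    (h : (4 : ℤ) ∣ 5 ^ x - 2 ^ y - 3) : y = 1 := by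
  have h5 : (4 : ℤ) ∣ 5 ^ x - 1 := by simpa using sub_dvd_pow_sub_pow (5 : ℤ) 1 x
  have h2 : (2 : ℤ) ^ 2 ∣ 2 ^ y - 2 := by
    rw [show (2 : ℤ) ^ y - 2 = (5 ^ x - 1) - (5 ^ x - 2 ^ y - 3) - 4 by ring]
    exact dvd_sub (dvd_sub h5 h) (by norm_num)
  exact (sq_dvd_pow_sub_self_iff one_lt_two y).mp h2

theorem eq_one_one_of_hundred_dvd {x y : ℕ} (h : (100 : ℤ) ∣ 5 ^ x - 2 ^ y - 3) :
    x = 1 ∧ y = 1 := by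
  obtain rfl : y = 1 :=
    eq_one_of_four_dvd_five_pow_sub_two_pow_sub_three (dvd_trans (by norm_num) h)
  have h25 : (5 : ℤ) ^ 2 ∣ 5 ^ x - 5 := by
    rw [show (5 : ℤ) ^ x - 5 = 5 ^ x - 2 ^ 1 - 3 by ring]
    exact dvd_trans (by norm_num) h
  exact ⟨(sq_dvd_pow_sub_self_iff (by norm_num) x).mp h25, rfl⟩

theorem cong_mod_100_iff_eq :
    {p : ℕ × ℕ | (100:ℤ) ∣ 5^p.1 - 2^p.2 - 3} =
      {p : ℕ × ℕ | (5:ℤ)^p.1 - 2^p.2 = 3} ∧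
    {p : ℕ × ℕ | (5:ℤ)^p.1 - 2^p.2 = 3} = {(1, 1)} := by
  have hcong : {p : ℕ × ℕ | (100:ℤ) ∣ 5^p.1 - 2^p.2 - 3} = {(1, 1)} := by
    ext ⟨x, y⟩
    refine ⟨fun h => ?_, fun h => ?_⟩
    · obtain ⟨rfl, rfl⟩ := eq_one_one_of_hundred_dvd h
      rfl
    · obtain ⟨rfl, rfl⟩ := Prod.mk.inj h
      norm_num
  have heq : {p : ℕ × ℕ | (5:ℤ)^p.1 - 2^p.2 = 3} = {(1, 1)} := by
    rw [← hcong]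
    ext ⟨x, y⟩
    refine ⟨fun h => ?_, fun h => ?_⟩
    · show (100 : ℤ) ∣ 5 ^ x - 2 ^ y - 3
      rw [show (5 : ℤ) ^ x - 2 ^ y = 3 from h, sub_self]
      exact dvd_zero 100
    · obtain ⟨rfl, rfl⟩ := eq_one_one_of_hundred_dvd h
      norm_num
  exact ⟨hcong.trans heq.symm, heq⟩
end

section
/- Let p be an odd prime, write p - 1 = 2^r · h with h odd, and let x be an integer not divisible by p. If n is a positive integer with x^n ≡ -1 (mod p) and n = 2^s · n' with n' odd, then s < r. -/
/-- If `r ≤ s`, the period `2 ^ r * h` divides `2 ^ s * m * h`, so `a ^ (2 ^ s * m * h)` would be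
both `1` and `(-1) ^ h = -1`. -/
theorem lt_of_pow_two_pow_mul_eq_neg_one {M : Type*} [Monoid M] [HasDistribNeg M]
    (hM : (-1 : M) ≠ 1) {a : M} {r h s m : ℕ} (hh : Odd h) (hperiod : a ^ (2 ^ r * h) = 1)
    (ha : a ^ (2 ^ s * m) = -1) : s < r := by
  by_contra! hrs
  have hdvd : 2 ^ r * h ∣ 2 ^ s * m * h :=
    mul_dvd_mul (dvd_mul_of_dvd_left (pow_dvd_pow 2 hrs) m) dvd_rfl
  obtain ⟨k, hk⟩ := hdvd
  have hone : a ^ (2 ^ s * m * h) = 1 := by rw [hk, pow_mul, hperiod, one_pow]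
  rw [pow_mul, ha, hh.neg_one_pow] at hone
  exact hM hone

theorem ZMod.intCast_pow_eq_neg_one_of_dvd {p : ℕ} {x : ℤ} {n : ℕ} (hdvd : (p : ℤ) ∣ x ^ n + 1) :
    (x : ZMod p) ^ n = -1 := by
  have hzero := (ZMod.intCast_zmod_eq_zero_iff_dvd (x ^ n + 1) p).mpr hdvd
  push_cast at hzero
  exact eq_neg_of_add_eq_zero_left hzero

theorem two_adic_lt_of_pow_cong_neg_one_general (p : ℕ) (hp : p.Prime) (hodd : Odd p)
    (r h : ℕ) (hh : Odd h) (hph : p - 1 = 2 ^ r * h)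
    (x : ℤ) (hx : ¬ (p : ℤ) ∣ x)
    (n s n' : ℕ) (hn : n = 2 ^ s * n')
    (hcong : (p : ℤ) ∣ x ^ n + 1) : s < r := by
  have : Fact p.Prime := ⟨hp⟩
  have : Fact (2 < p) := ⟨hp.two_le.lt_of_ne fun h2 => by subst h2; norm_num at hodd⟩
  have hx0 : (x : ZMod p) ≠ 0 := by rwa [Ne, ZMod.intCast_zmod_eq_zero_iff_dvd]
  have hperiod : (x : ZMod p) ^ (2 ^ r * h) = 1 := hph ▸ ZMod.pow_card_sub_one_eq_one hx0
  exact lt_of_pow_two_pow_mul_eq_neg_one ZMod.neg_one_ne_one hh hperiod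
    (hn ▸ ZMod.intCast_pow_eq_neg_one_of_dvd hcong)

theorem two_adic_lt_of_pow_cong_neg_one (p : ℕ) (hp : p.Prime) (hodd : Odd p)
    (r h : ℕ) (hh : Odd h) (hph : p - 1 = 2 ^ r * h)
    (x : ℤ) (hx : ¬ (p : ℤ) ∣ x)
    (n s n' : ℕ) (hnpos : 0 < n) (hn : n = 2 ^ s * n') (hn' : Odd n')
    (hcong : (p : ℤ) ∣ x ^ n + 1) : s < r :=
  two_adic_lt_of_pow_cong_neg_one_general p hp hodd r h hh hph x hx n s n' hn hcong
end

section
/- Let x be an integer with |x| > 1 and b, c integers with c = 1 or c = -1 and b + c ≠ 0. Then there exists a positive integer m such that the congruence x^n ≡ b + c (mod m) has exactly the same solutions in non-negative integers n as the equation x^n = b + c. -/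
/-!
Put `a = b + c` and choose `k` with `|a| < |x| ^ k`; take `m = |x| ^ (k + 1)`. If `n ≤ k` then
`|x ^ n - a| < 2 |x| ^ k ≤ m`, so `m ∣ x ^ n - a` forces `x ^ n = a`. If `n > k` then `m ∣ x ^ n`,
so `m ∣ x ^ n - a` would give `m ∣ a`, impossible for `0 < |a| < m`.
-/

namespace Int

lemma abs_pow_sub_lt_pow_succ {x a : ℤ} (hx : 1 < |x|) {n k : ℕ} (hn : n ≤ k)
    (hk : |a| < |x| ^ k) : |x ^ n - a| < |x| ^ (k + 1) :=
  calc |x ^ n - a| ≤ |x| ^ n + |a| := by simpa only [abs_pow] using abs_sub (x ^ n) a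
    _ < |x| ^ k + |x| ^ k := add_lt_add_of_le_of_lt (pow_le_pow_right₀ hx.le hn) hk
    _ ≤ |x| ^ (k + 1) := by rw [pow_succ]; nlinarith [pow_nonneg (abs_nonneg x) k]

lemma pow_succ_dvd_pow_sub_iff {x a : ℤ} (hx : 1 < |x|) (ha : a ≠ 0) {k : ℕ}
    (hk : |a| < |x| ^ k) (n : ℕ) : x ^ (k + 1) ∣ x ^ n - a ↔ x ^ n = a := by
  refine ⟨fun h => ?_, fun h => by rw [h, sub_self]; exact dvd_zero _⟩
  have h' : |x| ^ (k + 1) ∣ x ^ n - a := by rwa [← abs_pow, abs_dvd]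
  rcases le_or_gt n k with hn | hn
  · exact sub_eq_zero.mp (eq_zero_of_abs_lt_dvd h' (abs_pow_sub_lt_pow_succ hx hn hk))
  · have hxn : |x| ^ (k + 1) ∣ x ^ n := by
      rw [← abs_pow, abs_dvd]; exact pow_dvd_pow x hn
    have hdvd : |x| ^ (k + 1) ∣ a := by simpa using dvd_sub hxn h'
    exact absurd (eq_zero_of_abs_lt_dvd hdvd
      (hk.trans_le (pow_le_pow_right₀ hx.le k.le_succ))) ha

lemma abs_lt_abs_pow_natAbs {x : ℤ} (hx : 1 < |x|) (a : ℤ) : |a| < |x| ^ a.natAbs :=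
  calc |a| = (a.natAbs : ℤ) := abs_eq_natAbs a
    _ < 2 ^ a.natAbs := by exact_mod_cast a.natAbs.lt_two_pow_self
    _ ≤ |x| ^ a.natAbs := pow_le_pow_left₀ zero_le_two hx a.natAbs

end Int

theorem skolem_one_term_general (x b c : ℤ) (hx : 1 < |x|)
    (hbc : b + c ≠ 0) :
    ∃ m : ℕ, 0 < m ∧ ∀ n : ℕ, ((m : ℤ) ∣ x ^ n - (b + c) ↔ x ^ n = b + c) := by
  have hx0 : x ≠ 0 := abs_pos.mp (zero_lt_one.trans hx)
  refine ⟨(x ^ ((b + c).natAbs + 1)).natAbs, Int.natAbs_pos.mpr (pow_ne_zero _ hx0), fun n => ?_⟩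
  rw [Int.natAbs_dvd]
  exact Int.pow_succ_dvd_pow_sub_iff hx hbc (Int.abs_lt_abs_pow_natAbs hx _) n

theorem skolem_one_term (x b c : ℤ) (hx : 1 < |x|) (hc : c = 1 ∨ c = -1)
    (hbc : b + c ≠ 0) :
    ∃ m : ℕ, 0 < m ∧ ∀ n : ℕ, ((m : ℤ) ∣ x ^ n - (b + c) ↔ x ^ n = b + c) :=
  skolem_one_term_general x b c hx hbc
end

section
/- There exists a positive integer m such that the congruence 2^n - 3^k ≡ 1 (mod m) has exactly the same solutions in non-negative integers (n, k) as the equation 2^n - 3^k = 1, namely {(1, 0), (2, 1)}. -/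
/-!
Reduce modulo `72 = 8 · 9`. Modulo 8 the powers of 3 are only `1` and `3`, and `2 ^ n = 0` once
`n ≥ 3`; this forces `n ∈ {1, 2}`. Modulo 9, `3 ^ k = 0` once `k ≥ 2`, which would require
`2 ^ n = 1` with `n ∈ {1, 2}`; so `k ≤ 1`, and the four remaining pairs are checked modulo 8.
-/

lemma ZMod.two_pow_sub_three_pow_sub_one_eq_zero {m n k : ℕ} (h : (m : ℤ) ∣ 2 ^ n - 3 ^ k - 1) :
    (2 : ZMod m) ^ n - 3 ^ k - 1 = 0 := by
  exact_mod_cast (ZMod.intCast_zmod_eq_zero_iff_dvd _ m).2 h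

lemma ZMod.three_pow_eq_one_or_three (k : ℕ) :
    (3 : ZMod 8) ^ k = 1 ∨ (3 : ZMod 8) ^ k = 3 := by
  rw [pow_eq_pow_mod k (show (3 : ZMod 8) ^ 2 = 1 by decide)]
  rcases Nat.mod_two_eq_zero_or_one k with h | h <;> simp [h]

lemma eq_one_or_two_of_two_pow_sub_three_pow_zmod_eight {n k : ℕ}
    (h : (2 : ZMod 8) ^ n - 3 ^ k - 1 = 0) : n = 1 ∨ n = 2 := by
  rcases ZMod.three_pow_eq_one_or_three k with hk | hk <;> rw [hk] at h <;>
  · rcases lt_or_ge n 3 with hn | hn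
    · interval_cases n <;> revert h <;> decide
    · rw [pow_eq_zero_of_le hn (by decide : (2 : ZMod 8) ^ 3 = 0)] at h
      exact absurd h (by decide)

lemma eq_of_seventy_two_dvd_two_pow_sub_three_pow_sub_one {n k : ℕ}
    (h : (72 : ℤ) ∣ 2 ^ n - 3 ^ k - 1) : (n = 1 ∧ k = 0) ∨ (n = 2 ∧ k = 1) := by
  have h8 : (2 : ZMod 8) ^ n - 3 ^ k - 1 = 0 :=
    ZMod.two_pow_sub_three_pow_sub_one_eq_zero (dvd_trans (by norm_num) h)
  have h9 : (2 : ZMod 9) ^ n - 3 ^ k - 1 = 0 :=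
    ZMod.two_pow_sub_three_pow_sub_one_eq_zero (dvd_trans (by norm_num) h)
  have hn := eq_one_or_two_of_two_pow_sub_three_pow_zmod_eight h8
  have hk : k ≤ 1 := by
    by_contra! hk
    rw [pow_eq_zero_of_le hk (by decide : (3 : ZMod 9) ^ 2 = 0)] at h9
    rcases hn with rfl | rfl <;> revert h9 <;> decide
  interval_cases k <;> rcases hn with rfl | rfl <;> revert h8 <;> decide

theorem skolem_two_three :
    ∃ m : ℕ, 0 < m ∧
      (∀ n k : ℕ, ((m : ℤ) ∣ 2 ^ n - 3 ^ k - 1 ↔ (2:ℤ) ^ n - 3 ^ k = 1)) ∧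
      (∀ n k : ℕ, (2:ℤ) ^ n - 3 ^ k = 1 ↔ (n = 1 ∧ k = 0) ∨ (n = 2 ∧ k = 1)) := by
  have dvd_of_eq {m n k : ℕ} (h : (2 : ℤ) ^ n - 3 ^ k = 1) : (m : ℤ) ∣ 2 ^ n - 3 ^ k - 1 := by
    rw [h, sub_self]
    exact dvd_zero _
  have solutions (n k : ℕ) : (2 : ℤ) ^ n - 3 ^ k = 1 ↔ (n = 1 ∧ k = 0) ∨ (n = 2 ∧ k = 1) :=
    ⟨fun h => eq_of_seventy_two_dvd_two_pow_sub_three_pow_sub_one (dvd_of_eq h),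
      by rintro (⟨rfl, rfl⟩ | ⟨rfl, rfl⟩) <;> norm_num⟩
  refine ⟨72, by norm_num, fun n k => ⟨fun h => ?_, dvd_of_eq⟩, solutions⟩
  exact (solutions n k).2 (eq_of_seventy_two_dvd_two_pow_sub_three_pow_sub_one h)
end

section
/- For every pair of integers x, y with x > 1, y > 1 and (x, y) ≠ (3, 2), if the equation x^n - y^k = 1 has no solutions in integers n, k > 1, then there exists a modulus m ≥ 2 such that the congruence x^n - y^k ≡ 1 (mod m) has no solutions in integers n, k > 1. -/
/-!
Split the exponents `n` at a threshold `N`.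

For `n < N`, let `q > 1` divide `y`. A large power `q ^ K` cannot divide `x ^ n - y ^ k - 1`
when `k ≥ K`, since it would divide the positive number `x ^ n - 1 < x ^ N`; the finitely many
remaining values are nonzero integers, so a still larger power of `q` divides none of them.

For `n ≥ N` a power of a divisor of `x` divides `x ^ n`, leaving a congruence for `y ^ k + 1`.

If `x` is even and `y` odd, `2 ^ A ∣ y ^ k + 1` is impossible once `y + 1 < 2 ^ A`: for odd `k`
by lifting the exponent, for even `k` because `y ^ k + 1 ≡ 2 [ZMOD 4]`.

If `x` is odd and `y` even, pick a prime `ℓ ∤ y` dividing some `x ^ 2 ^ j + 1` (the odd prime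
factors of these numbers are pairwise distinct), then `A` with `x ^ 2 ^ j < 2 ^ A` and `N` with
`y ^ A < x ^ N`, and work modulo `x ^ N * 2 ^ A * ℓ`. Now `x ^ N ∣ y ^ k + 1` forces `k ≥ A`,
hence `2 ^ A ∣ x ^ n - 1`; the order of `x` modulo `2 ^ A` is a power of `2` exceeding `2 ^ j`,
so `2 ^ (j + 1) ∣ n` and `ℓ ∣ x ^ n - 1`. Then `ℓ` divides `y ^ k`, a contradiction.

If `x` and `y` have the same parity, `x ^ n - y ^ k - 1` is odd.
-/

namespace Catalan

def NoSolutionMod (x y m : ℤ) : Prop :=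
  ∀ n k : ℕ, 1 < n → 1 < k → ¬ m ∣ x ^ n - y ^ k - 1

variable {x y : ℤ}

theorem NoSolutionMod.two_le_natAbs {m : ℤ} (h : NoSolutionMod x y m) (hm : m ≠ 0) :
    2 ≤ m.natAbs := by
  have hm1 : m.natAbs ≠ 1 := fun hm1 =>
    h 2 2 one_lt_two one_lt_two (Int.natAbs_dvd.1 (by rw [hm1]; exact one_dvd _))
  have := Int.natAbs_ne_zero.2 hm
  omega

theorem noSolutionMod_two (h : Even x ↔ Even y) : NoSolutionMod x y 2 := by
  intro n k hn hk hdvd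
  rw [← even_iff_two_dvd, Int.even_sub, Int.even_sub, Int.even_pow, Int.even_pow] at hdvd
  simp [h] at hdvd
  omega

theorem noSolutionMod_mul {a b : ℤ} (N : ℕ)
    (hsmall : ∀ n k : ℕ, 1 < n → n < N → 1 < k → ¬ a ∣ x ^ n - y ^ k - 1)
    (hlarge : ∀ n k : ℕ, N ≤ n → 1 < k → ¬ b ∣ x ^ n - y ^ k - 1) :
    NoSolutionMod x y (a * b) := by
  intro n k hn hk hdvd
  rcases lt_or_ge n N with hnN | hNn
  · exact hsmall n k hn hnN hk ((dvd_mul_right a b).trans hdvd)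
  · exact hlarge n k hNn hk ((dvd_mul_left b a).trans hdvd)

theorem exists_pow_not_dvd_pow_sub_pow_sub_one {q : ℤ} (hx : 1 < x) (hy : 1 < y) (hq : 1 < q)
    (hqy : q ∣ y)
    (hsol : ∀ n k : ℕ, 1 < n → 1 < k → x ^ n - y ^ k ≠ 1) (N : ℕ) :
    ∃ A : ℕ, ∀ n k : ℕ, 1 < n → n < N → 1 < k → ¬ q ^ A ∣ x ^ n - y ^ k - 1 := by
  obtain ⟨K, hK⟩ := pow_unbounded_of_one_lt (x ^ N) hq
  obtain ⟨A, hA⟩ := pow_unbounded_of_one_lt (x ^ N + y ^ K) hq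
  refine ⟨max K A, fun n k hn hnN hk hdvd => ?_⟩
  have hxn : x ^ n < x ^ N := pow_lt_pow_right₀ hx hnN
  have hxn1 : 1 < x ^ n := one_lt_pow₀ hx (by omega)
  rcases le_or_gt K k with hKk | hkK
  · have hyk : q ^ K ∣ y ^ k := (pow_dvd_pow_of_dvd hqy K).trans (pow_dvd_pow y hKk)
    have hqx : q ^ K ∣ x ^ n - 1 := by
      have := dvd_add ((pow_dvd_pow q (le_max_left K A)).trans hdvd) hyk
      rwa [sub_right_comm, sub_add_cancel] at this
    have := Int.le_of_dvd (by linarith) hqx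
    linarith
  · have hyk : y ^ k < y ^ K := pow_lt_pow_right₀ hy hkK
    have hyk0 : 0 < y ^ k := by positivity
    have hqA : q ^ A ≤ q ^ max K A := pow_le_pow_right₀ hq.le (le_max_right K A)
    refine sub_ne_zero.2 (hsol n k hn hk) (Int.eq_zero_of_abs_lt_dvd
      ((pow_dvd_pow q (le_max_right K A)).trans hdvd) ?_)
    rw [abs_lt]
    constructor <;> linarith

theorem not_two_pow_dvd_pow_add_one {A : ℕ} (hy : Odd y) (hA : ¬ 2 ^ A ∣ y + 1) (k : ℕ) :
    ¬ 2 ^ A ∣ y ^ k + 1 := by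
  have hy1 : (2 : ℤ) ∣ y + 1 := hy.add_one.two_dvd
  rcases k.even_or_odd with ⟨i, rfl⟩ | hk
  · have hA2 : 2 ≤ A := by
      by_contra h
      exact hA ((pow_dvd_pow 2 (by omega : A ≤ 1)).trans (by simpa using hy1))
    intro h
    have h4 : (4 : ℤ) ∣ (y ^ i) ^ 2 + 1 := by
      rw [← pow_mul, mul_two]
      exact (pow_dvd_pow 2 hA2).trans h
    have := Int.sq_mod_four_eq_one_of_odd (hy.pow (n := i))
    omega
  · rw [pow_dvd_iff_le_emultiplicity] at hA ⊢
    have := emultiplicity_pow_sub_pow_of_prime Int.prime_two (x := y) (y := -1)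
      (by simpa using hy1) (by simpa [← even_iff_two_dvd] using hy)
      (n := k) (by simpa [← even_iff_two_dvd] using hk)
    rw [hk.neg_one_pow, sub_neg_eq_add, sub_neg_eq_add] at this
    rwa [this]

theorem two_pow_succ_dvd_of_two_pow_dvd_pow_sub_one {A j n : ℕ} (hx : Odd x)
    (hA : ¬ 2 ^ A ∣ x ^ 2 ^ j - 1) (h : 2 ^ A ∣ x ^ n - 1) : 2 ^ (j + 1) ∣ n := by
  have hA0 : A ≠ 0 := by rintro rfl; simp at hA
  have key (m : ℕ) : (x : ZMod (2 ^ A)) ^ m = 1 ↔ 2 ^ A ∣ x ^ m - 1 := by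
    rw [← sub_eq_zero]
    exact_mod_cast ZMod.intCast_zmod_eq_zero_iff_dvd (x ^ m - 1) (2 ^ A)
  have hunit : IsUnit (x : ZMod (2 ^ A)) := by
    obtain ⟨c, rfl⟩ := hx
    refine (ZMod.coe_int_isUnit_iff_isCoprime _ _).2 ?_
    push_cast
    exact IsCoprime.pow_left ⟨-c, 1, by ring⟩
  have hord : orderOf (x : ZMod (2 ^ A)) ∣ 2 ^ (A - 1) := by
    apply orderOf_dvd_of_pow_eq_one
    have := congrArg Units.val (ZMod.pow_totient hunit.unit)
    simpa [Nat.totient_prime_pow Nat.prime_two (Nat.pos_of_ne_zero hA0)] using this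
  obtain ⟨t, -, ht⟩ := (Nat.dvd_prime_pow Nat.prime_two).1 hord
  have hjt : j < t := by
    by_contra hle
    exact hA ((key _).1 (orderOf_dvd_iff_pow_eq_one.1 (ht ▸ pow_dvd_pow 2 (not_lt.1 hle))))
  exact (pow_dvd_pow 2 hjt).trans (ht ▸ orderOf_dvd_of_pow_eq_one ((key n).2 h))

theorem pow_two_pow_add_one_dvd_pow_sub_one (x : ℤ) {j n : ℕ} (h : 2 ^ (j + 1) ∣ n) :
    x ^ 2 ^ j + 1 ∣ x ^ n - 1 := by
  obtain ⟨m, rfl⟩ := h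
  calc x ^ 2 ^ j + 1 ∣ x ^ 2 ^ (j + 1) - 1 :=
        Dvd.intro (x ^ 2 ^ j - 1) (by rw [pow_succ 2 j, pow_mul]; ring)
    _ ∣ x ^ (2 ^ (j + 1) * m) - 1 := pow_one_sub_dvd_pow_mul_sub_one x _ m

theorem exists_odd_prime_dvd_sq_add_one {z : ℤ} (hz : Odd z) (hz1 : 1 < z) :
    ∃ ℓ : ℕ, ℓ.Prime ∧ ℓ ≠ 2 ∧ (ℓ : ℤ) ∣ z ^ 2 + 1 := by
  obtain ⟨c, rfl⟩ := hz
  have hw : Odd (2 * c ^ 2 + 2 * c + 1) := ⟨c ^ 2 + c, by ring⟩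
  have hw1 : (2 * c ^ 2 + 2 * c + 1).natAbs ≠ 1 := by
    have : 1 ≤ c := by omega
    have : 0 ≤ c ^ 2 := sq_nonneg c
    omega
  obtain ⟨ℓ, hℓ, hℓw⟩ := Nat.exists_prime_and_dvd hw1
  have hℓw : (ℓ : ℤ) ∣ 2 * c ^ 2 + 2 * c + 1 := Int.natCast_dvd.2 hℓw
  refine ⟨ℓ, hℓ, ?_, hℓw.trans ⟨2, by ring⟩⟩
  rintro rfl
  exact Int.not_even_iff_odd.2 hw (even_iff_two_dvd.2 hℓw)

theorem exists_prime_dvd_pow_two_pow_add_one_not_dvd (hx : Odd x) (hx1 : 1 < x) (hy : y ≠ 0) :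
    ∃ j ℓ : ℕ, ℓ.Prime ∧ (ℓ : ℤ) ∣ x ^ 2 ^ j + 1 ∧ ¬ (ℓ : ℤ) ∣ y := by
  choose g hg hg2 hgdvd using fun j : ℕ =>
    exists_odd_prime_dvd_sq_add_one (hx.pow (n := 2 ^ j)) (one_lt_pow₀ hx1 (by positivity))
  have hdvd (j : ℕ) : (g j : ℤ) ∣ x ^ 2 ^ (j + 1) + 1 := by
    rw [pow_succ 2 j, pow_mul]
    exact hgdvd j
  have hinj : g.Injective := by
    intro i j hij
    by_contra hne
    wlog hlt : i < j generalizing i j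
    · exact this hij.symm (Ne.symm hne) (by omega)
    -- `x ^ 2 ^ (j + 1) ≡ 1` modulo `x ^ 2 ^ (i + 1) + 1`, so a common prime factor divides `2`
    have hsub : (g j : ℤ) ∣ x ^ 2 ^ (j + 1) - 1 := hij ▸ (hdvd i).trans
      (pow_two_pow_add_one_dvd_pow_sub_one x (pow_dvd_pow 2 (show i + 2 ≤ j + 1 by omega)))
    have htwo : (g j : ℤ) ∣ 2 := by
      have := dvd_sub (hdvd j) hsub
      rwa [add_sub_sub_cancel, one_add_one_eq_two] at this
    exact hg2 j ((Nat.prime_dvd_prime_iff_eq (hg j) Nat.prime_two).1 (by exact_mod_cast htwo))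
  obtain ⟨_, ⟨j, rfl⟩, hj⟩ :=
    (Set.infinite_range_of_injective hinj).exists_notMem_finset y.natAbs.primeFactors
  refine ⟨j + 1, g j, hg j, hdvd j, fun h => hj ?_⟩
  exact Nat.mem_primeFactors.2 ⟨hg j, Int.natCast_dvd.1 h, Int.natAbs_ne_zero.2 hy⟩

theorem exists_noSolutionMod_of_even_of_odd (hx : Even x) (hx1 : 1 < x) (hy : Odd y)
    (hy1 : 1 < y) (hsol : ∀ n k : ℕ, 1 < n → 1 < k → x ^ n - y ^ k ≠ 1) :
    ∃ m ≠ 0, NoSolutionMod x y m := by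
  obtain ⟨A, hA⟩ := pow_unbounded_of_one_lt (y + 1) one_lt_two
  obtain ⟨B, hB⟩ := exists_pow_not_dvd_pow_sub_pow_sub_one hx1 hy1 hy1 dvd_rfl hsol A
  refine ⟨y ^ B * 2 ^ A, by positivity, noSolutionMod_mul A hB fun n k hAn _ hdvd => ?_⟩
  have hxn : 2 ^ A ∣ x ^ n := (pow_dvd_pow 2 hAn).trans (pow_dvd_pow_of_dvd hx.two_dvd n)
  refine not_two_pow_dvd_pow_add_one hy (fun h => (Int.le_of_dvd (by linarith) h).not_gt hA) k ?_
  rw [show y ^ k + 1 = x ^ n - (x ^ n - y ^ k - 1) by ring]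
  exact dvd_sub hxn hdvd

theorem exists_noSolutionMod_of_odd_of_even (hx : Odd x) (hx1 : 1 < x) (hy : Even y)
    (hy1 : 1 < y) (hsol : ∀ n k : ℕ, 1 < n → 1 < k → x ^ n - y ^ k ≠ 1) :
    ∃ m ≠ 0, NoSolutionMod x y m := by
  obtain ⟨j, ℓ, hℓ, hℓx, hℓy⟩ :=
    exists_prime_dvd_pow_two_pow_add_one_not_dvd hx hx1 (by omega : y ≠ 0)
  obtain ⟨A, hA⟩ := pow_unbounded_of_one_lt (x ^ 2 ^ j) one_lt_two
  obtain ⟨N, hN⟩ := pow_unbounded_of_one_lt (y ^ A) hx1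
  obtain ⟨B, hB⟩ := exists_pow_not_dvd_pow_sub_pow_sub_one hx1 hy1 one_lt_two hy.two_dvd hsol N
  have hℓ0 : (ℓ : ℤ) ≠ 0 := by exact_mod_cast hℓ.ne_zero
  refine ⟨2 ^ B * (x ^ N * 2 ^ A * ℓ), by positivity, noSolutionMod_mul N hB
    fun n k hNn _ hdvd => ?_⟩
  have hE {d : ℤ} (hd : d ∣ x ^ N * 2 ^ A * ℓ) : d ∣ x ^ n - y ^ k - 1 := hd.trans hdvd
  have hAk : A ≤ k := by
    have hyk : x ^ N ∣ y ^ k + 1 := by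
      rw [show y ^ k + 1 = x ^ n - (x ^ n - y ^ k - 1) by ring]
      exact dvd_sub (pow_dvd_pow x hNn) (hE (Dvd.intro (2 ^ A * ℓ) (by ring)))
    by_contra hkA
    have hyA : y ^ k + 1 ≤ y ^ A := calc
      y ^ k + 1 ≤ y ^ (k + 1) := by rw [pow_succ]; nlinarith [one_le_pow₀ (n := k) hy1.le]
      _ ≤ y ^ A := pow_le_pow_right₀ hy1.le (by omega)
    have := Int.le_of_dvd (by positivity) hyk
    linarith
  have hxn : 2 ^ A ∣ x ^ n - 1 := by
    rw [show x ^ n - 1 = (x ^ n - y ^ k - 1) + y ^ k by ring]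
    exact dvd_add (hE (dvd_mul_of_dvd_left (dvd_mul_left _ _) _))
      ((pow_dvd_pow 2 hAk).trans (pow_dvd_pow_of_dvd hy.two_dvd k))
  have hnj : 2 ^ (j + 1) ∣ n := by
    refine two_pow_succ_dvd_of_two_pow_dvd_pow_sub_one hx (fun h => ?_) hxn
    have := one_lt_pow₀ hx1 (pow_ne_zero j two_ne_zero)
    exact (Int.le_of_dvd (by linarith) h).not_gt (by linarith)
  have hℓyk : (ℓ : ℤ) ∣ y ^ k := by
    rw [show y ^ k = (x ^ n - 1) - (x ^ n - y ^ k - 1) by ring]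
    exact dvd_sub (hℓx.trans (pow_two_pow_add_one_dvd_pow_sub_one x hnj)) (hE (dvd_mul_left _ _))
  exact hℓy (Int.Prime.dvd_pow' hℓ hℓyk)

end Catalan

open Catalan

theorem catalan_local_general (x y : ℤ) (hx : 1 < x) (hy : 1 < y)
    (hnosol : ¬ ∃ n k : ℕ, 1 < n ∧ 1 < k ∧ x ^ n - y ^ k = 1) :
    ∃ m : ℕ, 2 ≤ m ∧ ∀ n k : ℕ, 1 < n → 1 < k →
      ¬ (m : ℤ) ∣ x ^ n - y ^ k - 1 := by
  have hsol : ∀ n k : ℕ, 1 < n → 1 < k → x ^ n - y ^ k ≠ 1 :=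
    fun n k hn hk h => hnosol ⟨n, k, hn, hk, h⟩
  obtain ⟨m, hm0, hm⟩ : ∃ m ≠ 0, NoSolutionMod x y m := by
    rcases Int.even_or_odd x with hxe | hxo <;> rcases Int.even_or_odd y with hye | hyo
    · exact ⟨2, two_ne_zero, noSolutionMod_two (iff_of_true hxe hye)⟩
    · exact exists_noSolutionMod_of_even_of_odd hxe hx hyo hy hsol
    · exact exists_noSolutionMod_of_odd_of_even hxo hx hye hy hsol
    · exact ⟨2, two_ne_zero, noSolutionMod_two
        (iff_of_false (Int.not_even_iff_odd.2 hxo) (Int.not_even_iff_odd.2 hyo))⟩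
  exact ⟨m.natAbs, hm.two_le_natAbs hm0, fun n k hn hk => Int.natAbs_dvd.not.2 (hm n k hn hk)⟩

theorem catalan_local (x y : ℤ) (hx : 1 < x) (hy : 1 < y)
    (hxy : (x, y) ≠ (3, 2))
    (hnosol : ¬ ∃ n k : ℕ, 1 < n ∧ 1 < k ∧ x ^ n - y ^ k = 1) :
    ∃ m : ℕ, 2 ≤ m ∧ ∀ n k : ℕ, 1 < n → 1 < k →
      ¬ (m : ℤ) ∣ x ^ n - y ^ k - 1 :=
  catalan_local_general x y hx hy hnosol
end

section
/- Let b, x, y₁, …, y_ℓ be integers. Then there exists a positive integer m such that the congruence x^n - b·y₁^{k₁}⋯y_ℓ^{k_ℓ} ≡ ε (mod m), with ε ∈ {1, -1}, has precisely the same solutions in non-negative integers (n, k₁, …, k_ℓ, ε) as the equation x^n - b·y₁^{k₁}⋯y_ℓ^{k_ℓ} = ε. -/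
set_option maxHeartbeats 1000000

/-- Exponentiation with the convention `0 ^ 0 = 0`. -/
def epow (x : ℤ) (n : ℕ) : ℤ := if x = 0 then 0 else x ^ n

lemma epow_of_ne (x : ℤ) (hx : x ≠ 0) (n : ℕ) : epow x n = x ^ n := if_neg hx

lemma epow_zero_base (n : ℕ) : epow 0 n = 0 := by simp [epow]

lemma natCast_dvd_int {Q : ℕ} {z : ℤ} (h : (Q : ℤ) ∣ z) : Q ∣ z.natAbs := Int.natCast_dvd.mp h

lemma int_prime (Q : ℕ) (h : Q.Prime) : Prime (Q : ℤ) := Nat.prime_iff_prime_int.mp h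

lemma prime_dvd_fold {ℓ : ℕ} {Q : ℕ} (hQ : Q.Prime) (b : ℤ) (y : Fin ℓ → ℤ) (k : Fin ℓ → ℕ)
    (hz : ∀ i, y i ≠ 0) (h : (Q : ℤ) ∣ b * ∏ i, epow (y i) (k i)) :
    (Q : ℤ) ∣ b * ∏ i, y i := by
  rcases (int_prime Q hQ).dvd_mul.mp h with h' | h'
  · exact h'.mul_right _
  · obtain ⟨i, -, hi⟩ := (int_prime Q hQ).exists_mem_finset_dvd h'
    rw [epow_of_ne _ (hz i)] at hi
    exact Dvd.dvd.mul_left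
      (((int_prime Q hQ).dvd_of_dvd_pow hi).trans (Finset.dvd_prod_of_mem y (Finset.mem_univ i))) b

lemma prime_big_not_dvd {Q : ℕ} {z : ℤ} (hz : z ≠ 0) (hbig : z.natAbs < Q) :
    ¬ (Q : ℤ) ∣ z := fun h => by
  have := Nat.le_of_dvd (Int.natAbs_pos.mpr hz) (natCast_dvd_int h); omega

/-- monomial versus finitely many constants -/
lemma lemC : ∀ (ℓ : ℕ) (b : ℤ) (y : Fin ℓ → ℤ) (C : Finset ℤ),
    ∃ m : ℕ, 0 < m ∧ ∀ (k : Fin ℓ → ℕ) (c : ℤ), c ∈ C →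
      (m : ℤ) ∣ b * ∏ i, epow (y i) (k i) - c → b * ∏ i, epow (y i) (k i) = c := by
  intro ℓ
  induction ℓ with
  | zero =>
    intro b y C
    refine ⟨1 + ∑ c ∈ C, (b - c).natAbs, by omega, ?_⟩
    intro k c hc hdvd
    have hprod : (∏ i : Fin 0, epow (y i) (k i)) = 1 := by simp
    rw [hprod, mul_one] at hdvd ⊢
    have h1 : (b - c).natAbs ≤ ∑ c ∈ C, (b - c).natAbs :=
      Finset.single_le_sum (f := fun d => (b - d).natAbs) (fun _ _ => Nat.zero_le _) hc
    have hz := Int.eq_zero_of_abs_lt_dvd hdvd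
      (by rw [Int.abs_eq_natAbs]; exact_mod_cast by omega)
    linarith
  | succ L IH =>
    intro b y C
    by_cases hzero : ∃ i, y i = 0
    · obtain ⟨i0, hi0⟩ := hzero
      refine ⟨1 + ∑ c ∈ C, c.natAbs, by omega, ?_⟩
      intro k c hc hdvd
      have hP : (∏ i, epow (y i) (k i)) = 0 :=
        Finset.prod_eq_zero (Finset.mem_univ i0) (by rw [hi0]; exact epow_zero_base _)
      rw [hP, mul_zero] at hdvd ⊢
      have h1 : c.natAbs ≤ ∑ c ∈ C, c.natAbs :=
        Finset.single_le_sum (f := fun d => d.natAbs) (fun _ _ => Nat.zero_le _) hc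
      have hz := Int.eq_zero_of_abs_lt_dvd hdvd
        (by rw [abs_sub_comm, sub_zero, Int.abs_eq_natAbs]; exact_mod_cast by omega)
      linarith
    push_neg at hzero
    by_cases hb : b = 0
    · subst hb
      refine ⟨1 + ∑ c ∈ C, c.natAbs, by omega, ?_⟩
      intro k c hc hdvd
      rw [zero_mul] at hdvd ⊢
      have h1 : c.natAbs ≤ ∑ c ∈ C, c.natAbs :=
        Finset.single_le_sum (f := fun d => d.natAbs) (fun _ _ => Nat.zero_le _) hc
      have hz := Int.eq_zero_of_abs_lt_dvd hdvd
        (by rw [abs_sub_comm, sub_zero, Int.abs_eq_natAbs]; exact_mod_cast by omega)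
      linarith
    by_cases h1 : y 0 = 1 ∨ y 0 = -1
    · obtain ⟨m1, hm1pos, hm1⟩ := IH b (fun i => y i.succ) C
      obtain ⟨m2, hm2pos, hm2⟩ := IH (-b) (fun i => y i.succ) C
      refine ⟨m1 * m2, Nat.mul_pos hm1pos hm2pos, ?_⟩
      intro k c hc hdvd
      have hsplit : (∏ i, epow (y i) (k i))
          = epow (y 0) (k 0) * ∏ i : Fin L, epow (y i.succ) (k i.succ) :=
        Fin.prod_univ_succ _
      have hd1 : (m1 : ℤ) ∣ ((m1 * m2 : ℕ) : ℤ) :=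
        Int.natCast_dvd_natCast.mpr (dvd_mul_right m1 m2)
      have hd2 : (m2 : ℤ) ∣ ((m1 * m2 : ℕ) : ℤ) :=
        Int.natCast_dvd_natCast.mpr (dvd_mul_left m2 m1)
      have hy0 : epow (y 0) (k 0) = 1 ∨ epow (y 0) (k 0) = -1 := by
        rw [epow_of_ne _ (hzero 0)]
        rcases h1 with h | h
        · left; rw [h, one_pow]
        · rw [h]
          rcases Nat.even_or_odd (k 0) with he | ho
          · left; exact he.neg_one_pow
          · right; exact ho.neg_one_pow
      rcases hy0 with h | h
      · rw [hsplit, h, one_mul] at hdvd ⊢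
        exact hm1 (fun i => k i.succ) c hc (hd1.trans hdvd)
      · rw [hsplit, h] at hdvd ⊢
        have e : b * (-1 * ∏ i : Fin L, epow (y i.succ) (k i.succ))
            = (-b) * ∏ i : Fin L, epow (y i.succ) (k i.succ) := by ring
        rw [e] at hdvd ⊢
        exact hm2 (fun i => k i.succ) c hc (hd2.trans hdvd)
    -- now y 0 has |y 0| ≥ 2
    push_neg at h1
    have hy0abs : 2 ≤ (y 0).natAbs := by
      have h0 := hzero 0
      rcases h1 with ⟨ha, hb'⟩
      omega
    set q := (y 0).natAbs.minFac with hq_def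
    have hq : q.Prime := Nat.minFac_prime (by omega)
    have hqy : (q : ℤ) ∣ y 0 := by
      have h1' : (q : ℤ) ∣ ((y 0).natAbs : ℤ) := Int.natCast_dvd_natCast.mpr (Nat.minFac_dvd _)
      exact h1'.trans (Int.natAbs_dvd.mpr dvd_rfl)
    set S := ∑ c ∈ C, c.natAbs with hS_def
    set s := S + 1 with hs_def
    have hps : S < q ^ s := by
      have h1' : s < q ^ s := Nat.lt_pow_self hq.one_lt
      omega
    have hprod_ne : b * ∏ i, y i ≠ 0 := by
      apply mul_ne_zero hb
      exact Finset.prod_ne_zero_iff.mpr (fun i _ => hzero i)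
    obtain ⟨Q0, hQ0big, hQ0⟩ := Nat.exists_infinite_primes ((b * ∏ i, y i).natAbs + 1)
    have hIH : ∀ j : ℕ, ∃ mj : ℕ, 0 < mj ∧ ∀ (k : Fin L → ℕ) (c : ℤ), c ∈ C →
        (mj : ℤ) ∣ (b * y 0 ^ j) * ∏ i, epow (y i.succ) (k i) - c →
        (b * y 0 ^ j) * ∏ i, epow (y i.succ) (k i) = c :=
      fun j => IH (b * y 0 ^ j) (fun i => y i.succ) C
    choose g hgpos hg using hIH
    refine ⟨q ^ s * Q0 * ∏ j ∈ Finset.range s, g j,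
      Nat.mul_pos (Nat.mul_pos (pow_pos hq.pos s) hQ0.pos)
        (Finset.prod_pos (fun j _ => hgpos j)), ?_⟩
    intro k c hc hdvd
    have hsplit : (∏ i, epow (y i) (k i))
        = (y 0) ^ (k 0) * ∏ i : Fin L, epow (y i.succ) (k i.succ) := by
      rw [Fin.prod_univ_succ, epow_of_ne _ (hzero 0)]
    by_cases hk0 : k 0 < s
    · have hdg : ((g (k 0) : ℤ)) ∣ ((q ^ s * Q0 * ∏ j ∈ Finset.range s, g j : ℕ) : ℤ) := by
        apply Int.natCast_dvd_natCast.mpr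
        exact Dvd.dvd.mul_left (Finset.dvd_prod_of_mem g (Finset.mem_range.mpr hk0)) _
      have e : b * ((y 0) ^ (k 0) * ∏ i : Fin L, epow (y i.succ) (k i.succ))
          = (b * y 0 ^ (k 0)) * ∏ i : Fin L, epow (y i.succ) (k i.succ) := by ring
      rw [hsplit, e] at hdvd ⊢
      exact hg (k 0) (fun i => k i.succ) c hc (hdg.trans hdvd)
    · exfalso
      push_neg at hk0
      have hqs_dvd_m : ((q : ℤ)) ^ s ∣ ((q ^ s * Q0 * ∏ j ∈ Finset.range s, g j : ℕ) : ℤ) := by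
        have : (q ^ s : ℕ) ∣ q ^ s * Q0 * ∏ j ∈ Finset.range s, g j :=
          Dvd.dvd.mul_right (dvd_mul_right _ _) _
        exact_mod_cast Int.natCast_dvd_natCast.mpr this
      have hfac : (y 0) ^ (k 0) ∣ b * ∏ i, epow (y i) (k i) :=
        ⟨b * ∏ i : Fin L, epow (y i.succ) (k i.succ), by rw [hsplit]; ring⟩
      have hqsP : (q : ℤ) ^ s ∣ b * ∏ i, epow (y i) (k i) :=
        dvd_trans (dvd_trans (pow_dvd_pow_of_dvd hqy s) (pow_dvd_pow (y 0) hk0)) hfac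
      have hqc : (q : ℤ) ^ s ∣ c := by
        have := dvd_sub hqsP (hqs_dvd_m.trans hdvd)
        simpa using this
      by_cases hc0 : c = 0
      · subst hc0
        have hQdvd : (Q0 : ℤ) ∣ b * ∏ i, epow (y i) (k i) := by
          have h1' : ((Q0 : ℤ)) ∣ ((q ^ s * Q0 * ∏ j ∈ Finset.range s, g j : ℕ) : ℤ) := by
            apply Int.natCast_dvd_natCast.mpr
            exact Dvd.dvd.mul_right (dvd_mul_left _ _) _
          have := h1'.trans hdvd
          simpa using this
        exact prime_big_not_dvd hprod_ne (by omega) (prime_dvd_fold hQ0 b y k hzero hQdvd)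
      · have hq' : q ^ s ∣ c.natAbs := by
          have h2 : ((q ^ s : ℕ) : ℤ) ∣ c := by exact_mod_cast hqc
          exact natCast_dvd_int h2
        have hcS : c.natAbs ≤ S :=
          Finset.single_le_sum (f := fun d => d.natAbs) (fun _ _ => Nat.zero_le _) hc
        have := Nat.le_of_dvd (Int.natAbs_pos.mpr hc0) hq'
        omega

/-- int power versus finitely many constants -/
lemma lemD (x : ℤ) (hx : 1 < |x|) (C : Finset ℤ) :
    ∃ m : ℕ, 0 < m ∧ ∀ (n : ℕ) (c : ℤ), c ∈ C → (m : ℤ) ∣ x ^ n - c → x ^ n = c := by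
  have hxabs : 2 ≤ x.natAbs := by
    rw [Int.abs_eq_natAbs] at hx; exact_mod_cast hx
  have hx0 : x ≠ 0 := by rintro rfl; simp at hx
  set p := x.natAbs.minFac with hp_def
  have hp : p.Prime := Nat.minFac_prime (by omega)
  have hpx : (p : ℤ) ∣ x := by
    have h1 : (p : ℤ) ∣ (x.natAbs : ℤ) := Int.natCast_dvd_natCast.mpr (Nat.minFac_dvd _)
    exact h1.trans (Int.natAbs_dvd.mpr dvd_rfl)
  set S := ∑ c ∈ C, c.natAbs with hS_def
  set s := S + 1 with hs_def
  have hps : S < p ^ s := by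
    have h1 : s < p ^ s := Nat.lt_pow_self hp.one_lt
    omega
  obtain ⟨Q0, hQ0big, hQ0⟩ := Nat.exists_infinite_primes (x.natAbs + 1)
  set W := 1 + S + ∑ n ∈ Finset.range s, ∑ c ∈ C, (x ^ n - c).natAbs with hW_def
  have hWpos : 0 < W := by omega
  refine ⟨p ^ s * Q0 * W, Nat.mul_pos (Nat.mul_pos (pow_pos hp.pos s) hQ0.pos) hWpos, ?_⟩
  intro n c hc hdvd
  have hm : ((p ^ s * Q0 * W : ℕ) : ℤ) = (p : ℤ) ^ s * Q0 * W := by push_cast; ring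
  rw [hm] at hdvd
  by_cases hc0 : c = 0
  · exfalso
    subst hc0
    have hQdvd : (Q0 : ℤ) ∣ x ^ n := by
      have : (Q0 : ℤ) ∣ (p : ℤ) ^ s * Q0 * W := ⟨(p:ℤ)^s * W, by ring⟩
      simpa using this.trans hdvd
    have hQx : (Q0 : ℤ) ∣ x := (int_prime _ hQ0).dvd_of_dvd_pow hQdvd
    have : Q0 ∣ x.natAbs := natCast_dvd_int hQx
    have := Nat.le_of_dvd (by omega) this
    omega
  by_cases hn : n < s
  · have h1 : (x ^ n - c).natAbs ≤ ∑ c ∈ C, (x ^ n - c).natAbs :=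
      Finset.single_le_sum (f := fun d => (x ^ n - d).natAbs) (fun _ _ => Nat.zero_le _) hc
    have h2 : (∑ c ∈ C, (x ^ n - c).natAbs) ≤ ∑ j ∈ Finset.range s, ∑ c ∈ C, (x ^ j - c).natAbs :=
      Finset.single_le_sum (f := fun j => ∑ c ∈ C, (x ^ j - c).natAbs)
        (fun _ _ => Nat.zero_le _) (Finset.mem_range.mpr hn)
    have hlt : (x ^ n - c).natAbs < p ^ s * Q0 * W := by
      have hW1 : (x ^ n - c).natAbs < W := by omega
      have : W ≤ p ^ s * Q0 * W := Nat.le_mul_of_pos_left _ (Nat.mul_pos (pow_pos hp.pos s) hQ0.pos)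
      omega
    have hmdvd : ((p ^ s * Q0 * W : ℕ) : ℤ) ∣ x ^ n - c := by rw [hm]; exact hdvd
    have hz : x ^ n - c = 0 := by
      apply Int.eq_zero_of_abs_lt_dvd hmdvd
      rw [Int.abs_eq_natAbs]
      exact_mod_cast hlt
    linarith [hz]
  · exfalso
    push_neg at hn
    have hpsn : (p : ℤ) ^ s ∣ x ^ n :=
      dvd_trans (pow_dvd_pow_of_dvd hpx s) (pow_dvd_pow x hn)
    have hpdvd : (p : ℤ) ^ s ∣ x ^ n - c := by
      have : ((p:ℤ) ^ s) ∣ (p : ℤ) ^ s * Q0 * W := ⟨(Q0:ℤ) * W, by ring⟩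
      exact this.trans hdvd
    have hpc : (p : ℤ) ^ s ∣ c := by
      have := dvd_sub hpsn hpdvd
      simpa using this
    have hpc' : p ^ s ∣ c.natAbs := by
      have h2 : ((p ^ s : ℕ) : ℤ) ∣ c := by exact_mod_cast hpc
      exact natCast_dvd_int h2
    have hcS : c.natAbs ≤ S := Finset.single_le_sum (f := fun d => d.natAbs) (fun _ _ => Nat.zero_le _) hc
    have := Nat.le_of_dvd (Int.natAbs_pos.mpr hc0) hpc'
    omega

lemma two_pow_le_abs_pow (x : ℤ) (hx : 1 < |x|) (e : ℕ) : (2:ℤ) ^ e ≤ |x| ^ e :=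
  pow_le_pow_left₀ (by norm_num) hx e

lemma pow_sub_one_ne (x : ℤ) (hx : 1 < |x|) {e : ℕ} (he : e ≠ 0) : x ^ e - 1 ≠ 0 := by
  intro h
  have h1 : x ^ e = 1 := by linarith
  have h2 : |x ^ e| = 1 := by rw [h1]; simp
  rw [abs_pow] at h2
  have h4 : (2:ℤ)^e ≤ |x|^e := two_pow_le_abs_pow x hx e
  have h5 : (2:ℤ) ≤ (2:ℤ)^e := by
    calc (2:ℤ) = 2^1 := by norm_num
    _ ≤ 2^e := pow_le_pow_right₀ (by norm_num) (by omega)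
  omega

lemma pow_sub_one_dvd_pow_sub_one (x : ℤ) {d e : ℕ} (h : d ∣ e) : x ^ d - 1 ∣ x ^ e - 1 := by
  obtain ⟨t, rfl⟩ := h
  rw [pow_mul]
  simpa using sub_dvd_pow_sub_pow (x ^ d) 1 t

/-- bridge : factorization of natAbs as emultiplicity over ℤ -/
lemma fact_em_bridge (r : ℕ) (hr : r.Prime) (z : ℤ) (hz : z ≠ 0) :
    (z.natAbs.factorization r : ℕ∞) = emultiplicity (r : ℤ) z := by
  haveI : Fact r.Prime := ⟨hr⟩
  rw [Nat.factorization_def _ hr, padicValNat_eq_emultiplicity (Int.natAbs_pos.mpr hz).ne',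
    Int.emultiplicity_natAbs]

lemma fact_em_bridge_nat (r : ℕ) (hr : r.Prime) (B : ℕ) (hB : B ≠ 0) :
    (B.factorization r : ℕ∞) = emultiplicity r B := by
  haveI : Fact r.Prime := ⟨hr⟩
  rw [Nat.factorization_def _ hr, padicValNat_eq_emultiplicity hB]

lemma lemVal' (r : ℕ) (hr : r.Prime) (x : ℤ) (hx : 1 < |x|) (hrx : ¬ (r:ℤ) ∣ x)
    (E : ℕ) (hE : E ≠ 0) :
    (x ^ E - 1).natAbs.factorization r
      ≤ (x ^ (2*(r-1)) - 1).natAbs.factorization r + (4*E).factorization r := by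
  have hr1 : 1 < r := hr.one_lt
  have hcc_ne : x ^ (2*(r-1)) - 1 ≠ 0 := pow_sub_one_ne x hx (by omega)
  have hE_ne : x ^ E - 1 ≠ 0 := pow_sub_one_ne x hx hE
  have h4E : (4*E) ≠ 0 := by omega
  have key : emultiplicity (r:ℤ) (x^E - 1)
      ≤ emultiplicity (r:ℤ) (x^(2*(r-1)) - 1) + emultiplicity r (4*E) := by
    rcases hr.eq_two_or_odd' with h2 | hodd
    · subst h2
      have hxodd : ¬ (2:ℤ) ∣ x := by exact_mod_cast hrx
      have hxy : (2:ℤ) ∣ x - 1 := by omega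
      have h2E : Even (2*E) := even_two_mul E
      have LTE := by
        exact Int.two_pow_sub_pow (x := x) (y := 1) (by simpa using hxy) hxodd h2E
      rw [one_pow] at LTE
      have hdvd1 : x^E - 1 ∣ x^(2*E) - 1 := pow_sub_one_dvd_pow_sub_one x ⟨2, by ring⟩
      have m1 : emultiplicity (2:ℤ) (x^E - 1) ≤ emultiplicity (2:ℤ) (x^(2*E) - 1) :=
        emultiplicity_le_emultiplicity_of_dvd_right hdvd1
      have sq : x^(2*(2-1)) - 1 = (x-1)*(x+1) := by ring_nf
      have m2 : emultiplicity (2:ℤ) ((x-1)*(x+1))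
          = emultiplicity 2 (x-1) + emultiplicity 2 (x+1) := emultiplicity_mul Int.prime_two
      have m3 : emultiplicity (2:ℤ) (((2*E : ℕ)):ℤ) = emultiplicity 2 (2*E) := by
        exact_mod_cast Int.natCast_emultiplicity 2 (2*E)
      have m4 : emultiplicity 2 (2*E) ≤ emultiplicity 2 (4*E) :=
        emultiplicity_le_emultiplicity_of_dvd_right ⟨2, by ring⟩
      calc emultiplicity (2:ℤ) (x^E - 1) ≤ emultiplicity (2:ℤ) (x^(2*E) - 1) := m1
        _ ≤ emultiplicity (2:ℤ) (x^(2*E) - 1) + 1 := le_self_add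
        _ = emultiplicity (2:ℤ) (x+1) + emultiplicity 2 (x-1) + emultiplicity (2:ℤ) ((2*E : ℕ) : ℤ) := by
            exact_mod_cast LTE
        _ = emultiplicity (2:ℤ) ((x-1)*(x+1)) + emultiplicity 2 (2*E) := by
            rw [m2, m3]; ring
        _ ≤ emultiplicity (2:ℤ) (x^(2*(2-1)) - 1) + emultiplicity 2 (4*E) := by
            rw [sq]; exact add_le_add le_rfl m4
    · haveI : Fact r.Prime := ⟨hr⟩
      by_cases hdvd0 : (r:ℤ) ∣ x^E - 1
      · have hXne : (x : ZMod r) ≠ 0 := fun h => hrx ((ZMod.intCast_zmod_eq_zero_iff_dvd x r).mp h)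
        have hXE : (x : ZMod r)^E = 1 := by
          have h := (ZMod.intCast_zmod_eq_zero_iff_dvd (x^E - 1) r).mpr hdvd0
          push_cast at h
          exact sub_eq_zero.mp h
        have hfin : IsOfFinOrder (x : ZMod r) :=
          isOfFinOrder_iff_pow_eq_one.mpr ⟨E, Nat.pos_of_ne_zero hE, hXE⟩
        set d := orderOf (x : ZMod r) with hd_def
        have hdE : d ∣ E := orderOf_dvd_of_pow_eq_one hXE
        have hdr : d ∣ r - 1 := orderOf_dvd_of_pow_eq_one (ZMod.pow_card_sub_one_eq_one hXne)
        have hrd : (r:ℤ) ∣ x^d - 1 := by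
          have hske : (x : ZMod r)^d = 1 := pow_orderOf_eq_one _
          have h : ((x^d - 1 : ℤ) : ZMod r) = 0 := by
            push_cast
            rw [hske]
            ring
          exact (ZMod.intCast_zmod_eq_zero_iff_dvd _ r).mp h
        have hndvd : ¬ (r:ℤ) ∣ (x^d) := fun h =>
          hrx ((Nat.prime_iff_prime_int.mp hr).dvd_of_dvd_pow h)
        have LTE := by
          exact Int.emultiplicity_pow_sub_pow hr hodd (x := x^d) (y := 1) (by simpa using hrd) hndvd (E / d)
        rw [one_pow, ← pow_mul, Nat.mul_div_cancel' hdE] at LTE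
        calc emultiplicity (r:ℤ) (x^E - 1)
            = emultiplicity (r:ℤ) (x^d - 1) + emultiplicity r (E/d) := LTE
          _ ≤ emultiplicity (r:ℤ) (x^(2*(r-1)) - 1) + emultiplicity r (4*E) := by
              apply add_le_add
              · exact emultiplicity_le_emultiplicity_of_dvd_right
                  (pow_sub_one_dvd_pow_sub_one x (hdr.trans ⟨2, by ring⟩))
              · exact emultiplicity_le_emultiplicity_of_dvd_right
                  ((Nat.div_dvd_of_dvd hdE).trans ⟨4, by ring⟩)
      · rw [emultiplicity_eq_zero.mpr hdvd0]
        exact zero_le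
  rw [← fact_em_bridge r hr _ hE_ne, ← fact_em_bridge r hr _ hcc_ne,
    ← fact_em_bridge_nat r hr _ h4E] at key
  exact_mod_cast key

lemma lemGrow (C : ℕ) : ∃ E0 : ℕ, 2 ≤ E0 ∧ ∀ e, E0 ≤ e → C * (8 * e) + 1 < 2 ^ e := by
  refine ⟨8 * C + 16, by omega, ?_⟩
  have K : C + 1 ≤ 2 ^ C := Nat.lt_two_pow_self
  refine Nat.le_induction ?_ ?_
  · have h4 : (C+1)*(C+1)*(C+1)*(C+1) ≤ 2^C*2^C*2^C*2^C :=
      Nat.mul_le_mul (Nat.mul_le_mul (Nat.mul_le_mul K K) K) K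
    have hpow : 2 ^ (8 * C + 16) = 65536 * (2^C*2^C*2^C*2^C) * 2^(4*C) := by
      rw [show 8*C+16 = C+(C+(C+(C+16)))+4*C by ring]
      rw [pow_add, pow_add, pow_add, pow_add, pow_add]; ring
    have e1 : C * (8 * (8 * C + 16)) + 1 < 129 * ((C+1)*(C+1)) := by nlinarith
    have e2 : (C+1)*(C+1) ≤ (C+1)*(C+1)*((C+1)*(C+1)) :=
      Nat.le_mul_of_pos_right _ (by positivity)
    have e3 : 129 * ((C+1)*(C+1)) ≤ 65536 * ((C+1)*(C+1)*(C+1)*(C+1)) := by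
      calc 129 * ((C+1)*(C+1)) ≤ 65536 * ((C+1)*(C+1)*((C+1)*(C+1))) :=
            Nat.mul_le_mul (by omega) e2
        _ = 65536 * ((C+1)*(C+1)*(C+1)*(C+1)) := by ring
    have e4 : 65536 * ((C+1)*(C+1)*(C+1)*(C+1)) ≤ 65536 * (2^C*2^C*2^C*2^C) :=
      Nat.mul_le_mul_left _ h4
    have e5 : 65536 * (2^C*2^C*2^C*2^C) ≤ 65536 * (2^C*2^C*2^C*2^C) * 2^(4*C) :=
      Nat.le_mul_of_pos_right _ (by positivity)
    omega
  · intro e he IH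
    have h4C : 8 * C ≤ e := by omega
    have h2 : 8 * C ≤ 2 ^ e := le_trans h4C (Nat.le_of_lt (Nat.lt_two_pow_self))
    have hh : C * (8 * (e + 1)) + 1 = (C * (8 * e) + 1) + 8 * C := by ring
    rw [hh, pow_succ]
    omega

lemma lemF (x : ℤ) (hx : 1 < |x|) (N : ℕ) (hN : N ≠ 0) :
    ∃ E0 : ℕ, 2 ≤ E0 ∧ ∀ e, E0 ≤ e →
      (∃ Q : ℕ, Q.Prime ∧ ¬ Q ∣ N ∧ (Q:ℤ) ∣ x ^ e - 1) ∧
      (∃ Q : ℕ, Q.Prime ∧ ¬ Q ∣ N ∧ (Q:ℤ) ∣ x ^ e + 1) := by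
  set cc : ℕ → ℕ := fun r => (x ^ (2*(r-1)) - 1).natAbs.factorization r with hcc_def
  set CF := ∏ r ∈ N.primeFactors, r ^ (cc r) with hCF_def
  have hCF0 : CF ≠ 0 := by
    rw [hCF_def]
    exact Finset.prod_ne_zero_iff.mpr
      (fun r hr => pow_ne_zero _ (Nat.prime_of_mem_primeFactors hr).pos.ne')
  obtain ⟨E0, hE02, hgrow⟩ := lemGrow CF
  refine ⟨E0, hE02, ?_⟩
  intro e he
  have he2 : 2 ≤ e := le_trans hE02 he
  have h8e : 8 * e ≠ 0 := by omega
  have h2e0 : 2 * e ≠ 0 := by omega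
  have hB_ne : x ^ (2*e) - 1 ≠ 0 := pow_sub_one_ne x hx h2e0
  have hBabs_ne : (x ^ (2*e) - 1).natAbs ≠ 0 := fun h => hB_ne (Int.natAbs_eq_zero.mp h)
  have h2pow4 : 4 ≤ 2 ^ e := by
    calc (4:ℕ) = 2^2 := by norm_num
    _ ≤ 2^e := Nat.pow_le_pow_right (by norm_num) he2
  have main : ∀ z : ℤ, z ∣ x^(2*e) - 1 → (2^e - 1 : ℕ) ≤ z.natAbs →
      (∀ Q : ℕ, Q.Prime → (Q:ℤ) ∣ z → Q ∣ N) → False := by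
    intro z hzdvd hzbig hall
    set A := z.natAbs with hA_def
    have hA0 : A ≠ 0 := by omega
    have hz0 : z ≠ 0 := fun h => hA0 (by rw [hA_def, h]; rfl)
    have hAB : A ∣ (x ^ (2*e) - 1).natAbs := Int.natAbs_dvd_natAbs.mpr hzdvd
    have hdvdCF : A ∣ CF * (8*e) := by
      rw [← Nat.factorization_le_iff_dvd hA0 (mul_ne_zero hCF0 h8e)]
      rw [Finsupp.le_def]
      intro r
      by_cases hrA : A.factorization r = 0
      · rw [hrA]; exact Nat.zero_le _
      · have hrmem : r ∈ A.primeFactors := by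
          rw [← Nat.support_factorization]
          exact Finsupp.mem_support_iff.mpr hrA
        have hrp : r.Prime := Nat.prime_of_mem_primeFactors hrmem
        have hrA_dvd : r ∣ A := Nat.dvd_of_mem_primeFactors hrmem
        have hrz : (r:ℤ) ∣ z := Int.natCast_dvd.mpr hrA_dvd
        have hrN : r ∣ N := hall r hrp hrz
        have hrx : ¬ (r:ℤ) ∣ x := by
          intro h
          have h1 : (r:ℤ) ∣ x ^ (2*e) := h.trans (dvd_pow_self x h2e0)
          have h2 : (r:ℤ) ∣ x ^ (2*e) - 1 := hrz.trans hzdvd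
          have h3 : (r:ℤ) ∣ 1 := by
            have := dvd_sub h1 h2
            simpa using this
          have h4 : (r:ℤ) ≤ 1 := Int.le_of_dvd one_pos h3
          have := hrp.one_lt
          omega
        have b1 : A.factorization r ≤ (x ^ (2*e) - 1).natAbs.factorization r :=
          (Nat.factorization_le_iff_dvd hA0 hBabs_ne).mpr hAB r
        have b2 : (x ^ (2*e) - 1).natAbs.factorization r ≤ cc r + (8*e).factorization r := by
          have := lemVal' r hrp x hx hrx (2*e) h2e0
          rwa [show 4*(2*e) = 8*e by ring] at this
        have hrNm : r ∈ N.primeFactors := Nat.mem_primeFactors.mpr ⟨hrp, hrN, hN⟩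
        have b3 : cc r ≤ CF.factorization r := by
          rw [← Nat.Prime.pow_dvd_iff_le_factorization hrp hCF0]
          exact Finset.dvd_prod_of_mem _ hrNm
        have b4 : (CF * (8*e)).factorization r
            = CF.factorization r + (8*e).factorization r := by
          rw [Nat.factorization_mul hCF0 h8e]; rfl
        rw [b4]
        omega
    have hAle : A ≤ CF * (8*e) := Nat.le_of_dvd (by positivity) hdvdCF
    have := hgrow e he
    omega
  constructor
  · by_contra hno
    push_neg at hno
    refine main (x^e - 1) (pow_sub_one_dvd_pow_sub_one x ⟨2, by ring⟩) ?_ ?_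
    · have h1 : (2:ℤ)^e - 1 ≤ |x^e - 1| := by
        have h2 := two_pow_le_abs_pow x hx e
        have h3 : |x^e| - |(1:ℤ)| ≤ |x^e - 1| := abs_sub_abs_le_abs_sub _ _
        rw [abs_pow] at h3
        simp only [abs_one] at h3
        linarith
      have h4 : ((2^e - 1 : ℕ) : ℤ) ≤ ((x^e - 1).natAbs : ℤ) := by
        rw [Int.natCast_natAbs]
        push_cast [Nat.one_le_two_pow]
        exact h1
      exact_mod_cast h4
    · intro Q hQ hdv
      by_contra hndN
      exact hno Q hQ hndN hdv
  · by_contra hno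
    push_neg at hno
    refine main (x^e + 1) ⟨x^e - 1, by rw [two_mul, pow_add]; ring⟩ ?_ ?_
    · have h1 : (2:ℤ)^e - 1 ≤ |x^e + 1| := by
        have h2 := two_pow_le_abs_pow x hx e
        have h3 := abs_sub_abs_le_abs_sub (x^e) (-1)
        rw [abs_pow] at h3
        simp only [abs_neg, abs_one, sub_neg_eq_add] at h3
        linarith
      have h4 : ((2^e - 1 : ℕ) : ℤ) ≤ ((x^e + 1).natAbs : ℤ) := by
        rw [Int.natCast_natAbs]
        push_cast [Nat.one_le_two_pow]
        exact h1
      exact_mod_cast h4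
    · intro Q hQ hdv
      by_contra hndN
      exact hno Q hQ hndN hdv

lemma prime_dvd_fold' {ℓ : ℕ} {Q : ℕ} (hQ : Q.Prime) (b : ℤ) (y : Fin ℓ → ℤ) (k : Fin ℓ → ℕ)
    (h : (Q : ℤ) ∣ b * ∏ i, (y i) ^ (k i)) :
    (Q : ℤ) ∣ b * ∏ i, y i := by
  rcases (int_prime Q hQ).dvd_mul.mp h with h' | h'
  · exact h'.mul_right _
  · obtain ⟨i, -, hi⟩ := (int_prime Q hQ).exists_mem_finset_dvd h'
    exact Dvd.dvd.mul_left
      (((int_prime Q hQ).dvd_of_dvd_pow hi).trans (Finset.dvd_prod_of_mem y (Finset.mem_univ i))) b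

lemma lemK (ℓ : ℕ) (x b : ℤ) (y : Fin ℓ → ℤ) (hx : 1 < |x|) (hb : b ≠ 0)
    (hy : ∀ i, 1 < |y i|) (hco : IsCoprime x (b * ∏ i, y i)) (j : Fin ℓ) :
    ∃ s w : ℕ, 0 < s ∧ 0 < w ∧ ∀ (n : ℕ) (k : Fin ℓ → ℕ) (ε : ℤ), (ε = 1 ∨ ε = -1) →
      (w:ℤ) ∣ x ^ n - b * ∏ i, (y i) ^ (k i) - ε → k j < s := by
  have hyne : ∀ i, y i ≠ 0 := fun i => by have := hy i; intro h; rw [h] at this; simp at this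
  set N' := (b * ∏ i, y i).natAbs with hN'_def
  have hprod_ne : b * ∏ i, y i ≠ 0 :=
    mul_ne_zero hb (Finset.prod_ne_zero_iff.mpr (fun i _ => hyne i))
  have hN'0 : N' ≠ 0 := fun h => hprod_ne (Int.natAbs_eq_zero.mp h)
  obtain ⟨E0, hE02, hEF⟩ := lemF x hx N' hN'0
  set q := (y j).natAbs.minFac with hq_def
  have hyjabs : 2 ≤ (y j).natAbs := by
    have := hy j; rw [Int.abs_eq_natAbs] at this; exact_mod_cast this
  have hq : q.Prime := Nat.minFac_prime (by omega)
  have hqy : (q : ℤ) ∣ y j := by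
    have h1 : (q : ℤ) ∣ ((y j).natAbs : ℤ) := Int.natCast_dvd_natCast.mpr (Nat.minFac_dvd _)
    exact h1.trans (Int.natAbs_dvd.mpr dvd_rfl)
  set X := x.natAbs with hX_def
  have hX2 : 2 ≤ X := by rw [Int.abs_eq_natAbs] at hx; exact_mod_cast hx
  set s := X ^ (2*E0+2) + 2 with hs_def
  have hspos : 0 < s := by positivity
  have hqs_big : X ^ (2*E0+2) + 1 < q ^ s := by
    have h1 : s < q ^ s := Nat.lt_pow_self hq.one_lt
    omega
  set N := q ^ s with hN_def
  have hN4 : 4 ≤ N := by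
    calc (4:ℕ) = 2^2 := by norm_num
    _ ≤ q ^ 2 := Nat.pow_le_pow_left hq.two_le 2
    _ ≤ q ^ s := Nat.pow_le_pow_right hq.pos (by omega)
  haveI : NeZero N := ⟨by omega⟩
  have hcoq : IsCoprime x ((q:ℤ)) :=
    hco.of_isCoprime_of_dvd_right
      (hqy.trans (dvd_mul_of_dvd_right (Finset.dvd_prod_of_mem y (Finset.mem_univ j)) b))
  have hcoN : IsCoprime x ((N:ℤ)) := by
    have := hcoq.pow_right (n := s)
    rwa [hN_def, show ((q^s : ℕ):ℤ) = (q:ℤ)^s by push_cast; ring]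
  obtain ⟨a, bz, hab⟩ := hcoN
  have hunit : IsUnit ((x : ZMod N)) := by
    apply IsUnit.of_mul_eq_one ((a : ZMod N))
    have hcast : ((a * x + bz * N : ℤ) : ZMod N) = ((1 : ℤ) : ZMod N) := by rw [hab]
    push_cast at hcast
    rw [ZMod.natCast_self] at hcast
    rw [mul_comm]
    simpa using hcast
  set u := hunit.unit with hu_def
  have hu_coe : (u : ZMod N) = (x : ZMod N) := hunit.unit_spec
  set D := orderOf u with hD_def
  have hD0 : 0 < D := orderOf_pos u
  have hXD : ((x : ZMod N))^D = 1 := by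
    rw [← hu_coe, ← Units.val_pow_eq_pow_val, pow_orderOf_eq_one, Units.val_one]
  have hxD : (N:ℤ) ∣ x^D - 1 := by
    rw [← ZMod.intCast_zmod_eq_zero_iff_dvd]
    push_cast
    rw [hXD]
    ring
  have hxD_ne : x^D - 1 ≠ 0 := pow_sub_one_ne x hx (by omega)
  have hD_big : 2*E0 + 2 < D := by
    have h1 : N ∣ (x^D - 1).natAbs := natCast_dvd_int (by exact_mod_cast hxD)
    have h2 : N ≤ (x^D - 1).natAbs :=
      Nat.le_of_dvd (Int.natAbs_pos.mpr hxD_ne) h1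
    have h3 : ((x^D - 1).natAbs : ℤ) ≤ (X:ℤ)^D + 1 := by
      rw [Int.natCast_natAbs]
      have h4 : |x^D - 1| ≤ |x^D| + 1 := by
        have := abs_sub_abs_le_abs_sub (x^D) 1
        have h5 := abs_sub (x^D) 1
        calc |x^D - 1| ≤ |x^D| + |(1:ℤ)| := abs_sub _ _
          _ = |x^D| + 1 := by simp
      rw [abs_pow] at h4
      have : (|x|:ℤ) = (X:ℤ) := by rw [Int.abs_eq_natAbs]
      rw [this] at h4
      exact h4
    have h6 : (N:ℤ) ≤ (X:ℤ)^D + 1 := le_trans (by exact_mod_cast h2) h3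
    have h7 : N ≤ X^D + 1 := by exact_mod_cast h6
    by_contra hcon
    push_neg at hcon
    have h8 : X^D ≤ X^(2*E0+2) := Nat.pow_le_pow_right (by omega) hcon
    omega
  obtain ⟨QA, hQAp, hQAndvd, hQAdvd⟩ := (hEF D (by omega)).1
  obtain ⟨QB, hQBp, hQBndvd, hQBdvd⟩ := (hEF (D/2) (by omega)).2
  refine ⟨s, N * (QA * QB), hspos, Nat.mul_pos (by omega) (Nat.mul_pos hQAp.pos hQBp.pos), ?_⟩
  intro n k ε hε hdvd
  by_contra hk
  push_neg at hk
  set P := ∏ i, (y i) ^ (k i) with hP_def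
  have hNdvd_w : (N:ℤ) ∣ ((N * (QA * QB) : ℕ) : ℤ) :=
    Int.natCast_dvd_natCast.mpr (dvd_mul_right _ _)
  have hqsP : (N:ℤ) ∣ b * P := by
    have h1 : (q:ℤ)^s ∣ (y j)^s := pow_dvd_pow_of_dvd hqy s
    have h2 : (y j)^s ∣ (y j)^(k j) := pow_dvd_pow _ hk
    have h3 : (y j)^(k j) ∣ P := Finset.dvd_prod_of_mem (fun i => (y i)^(k i)) (Finset.mem_univ j)
    have h4 : (q:ℤ)^s ∣ b * P := ((h1.trans h2).trans h3).mul_left b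
    rwa [hN_def, show ((q^s : ℕ):ℤ) = (q:ℤ)^s by push_cast; ring]
  have hNxe : (N:ℤ) ∣ x^n - ε := by
    have h1 : (N:ℤ) ∣ x^n - b*P - ε := hNdvd_w.trans hdvd
    have h2 : x^n - ε = (x^n - b*P - ε) + b*P := by ring
    rw [h2]
    exact dvd_add h1 hqsP
  have finisher : ∀ Q : ℕ, Q.Prime → ¬ Q ∣ N' → (Q:ℤ) ∣ ((N * (QA * QB) : ℕ) : ℤ) →
      (Q:ℤ) ∣ x^n - ε → False := by
    intro Q hp hnd hQw hQn
    have h1 : (Q:ℤ) ∣ x^n - b*P - ε := hQw.trans hdvd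
    have h2 : (Q:ℤ) ∣ b*P := by
      have h3 : b*P = (x^n - ε) - (x^n - b*P - ε) := by ring
      rw [h3]
      exact dvd_sub hQn h1
    exact hnd (natCast_dvd_int (prime_dvd_fold' hp b y k h2))
  have hQAw : (QA:ℤ) ∣ ((N * (QA * QB) : ℕ) : ℤ) :=
    Int.natCast_dvd_natCast.mpr ⟨N * QB, by ring⟩
  have hQBw : (QB:ℤ) ∣ ((N * (QA * QB) : ℕ) : ℤ) :=
    Int.natCast_dvd_natCast.mpr ⟨N * QA, by ring⟩
  have hXn : ((x : ZMod N))^n = ((ε:ℤ) : ZMod N) := by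
    have h1 : ((x^n - ε : ℤ) : ZMod N) = 0 := (ZMod.intCast_zmod_eq_zero_iff_dvd _ N).mpr hNxe
    push_cast at h1
    exact sub_eq_zero.mp h1
  rcases hε with hε1 | hε1
  · -- ε = 1
    subst hε1
    have hun : u^n = 1 := by
      apply Units.ext
      push_cast
      rw [hu_coe]
      simpa using hXn
    have hDn : D ∣ n := orderOf_dvd_of_pow_eq_one hun
    have hQAn : (QA:ℤ) ∣ x^n - 1 := hQAdvd.trans (pow_sub_one_dvd_pow_sub_one x hDn)
    exact finisher QA hQAp hQAndvd hQAw hQAn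
  · -- ε = -1
    subst hε1
    set r := n % D with hr_def
    set t := n / D with ht_def
    have hnrt : n = D * t + r := (Nat.div_add_mod n D).symm
    have hXr : ((x : ZMod N))^r = -1 := by
      have h1 : ((x:ZMod N))^n = ((x:ZMod N)^D)^t * (x:ZMod N)^r := by
        rw [← pow_mul, ← pow_add, ← hnrt]
      rw [hXD, one_pow, one_mul] at h1
      rw [← h1, hXn]
      push_cast
      ring
    have hr0 : r ≠ 0 := by
      intro h
      rw [h, pow_zero] at hXr
      have h2 : ((2:ℤ) : ZMod N) = 0 := by
        push_cast
        linear_combination hXr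
      have h3 : (N:ℤ) ∣ 2 := (ZMod.intCast_zmod_eq_zero_iff_dvd _ N).mp h2
      have h4 : (N:ℤ) ≤ 2 := Int.le_of_dvd (by norm_num) h3
      have : (4:ℤ) ≤ (N:ℤ) := by exact_mod_cast hN4
      omega
    have hX2r : ((x : ZMod N))^(2*r) = 1 := by
      rw [show 2*r = r*2 by ring, pow_mul, hXr]
      ring
    have hu2r : u^(2*r) = 1 := by
      apply Units.ext
      push_cast
      rw [hu_coe]
      simpa using hX2r
    have hD2r : D ∣ 2*r := orderOf_dvd_of_pow_eq_one hu2r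
    have hrD : r < D := Nat.mod_lt n hD0
    have hD2r_eq : 2*r = D := by
      obtain ⟨c, hc⟩ := hD2r
      have hc2 : c < 2 := by
        by_contra hcc
        push_neg at hcc
        have : D*2 ≤ D*c := Nat.mul_le_mul_left D hcc
        omega
      interval_cases c <;> omega
    have hQB' : (QB:ℤ) ∣ x^r + 1 := by
      rw [show D/2 = r by omega] at hQBdvd
      exact hQBdvd
    have hmodeq : (x^r : ℤ) ≡ -1 [ZMOD (QB:ℤ)] := by
      rw [Int.modEq_iff_dvd]
      have h5 : (-1 : ℤ) - x^r = -(x^r + 1) := by ring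
      rw [h5]
      exact dvd_neg.mpr hQB'
    have hoddn : n = r * (2*t + 1) := by rw [hnrt, ← hD2r_eq]; ring
    have hpow : (x^n : ℤ) ≡ (-1)^(2*t+1) [ZMOD (QB:ℤ)] := by
      rw [hoddn, pow_mul]
      exact hmodeq.pow (2*t+1)
    have hneg : ((-1:ℤ))^(2*t+1) = -1 := Odd.neg_one_pow ⟨t, by ring⟩
    rw [hneg] at hpow
    have hQBn : (QB:ℤ) ∣ x^n + 1 := by
      have h6 := Int.ModEq.dvd hpow
      have h7 : x^n + 1 = -(-1 - x^n) := by ring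
      rw [h7]
      exact dvd_neg.mpr (by rw [Int.modEq_iff_dvd] at hpow; exact hpow)
    have h8 : x^n - (-1 : ℤ) = x^n + 1 := by ring
    exact finisher QB hQBp hQBndvd hQBw (by rw [h8]; exact hQBn)

lemma abs_gt_one (z : ℤ) (h0 : z ≠ 0) (h1 : z ≠ 1) (h2 : z ≠ -1) : 1 < |z| := by
  by_contra h
  push_neg at h
  have := abs_le.mp h
  omega

lemma ne_zero_of_abs {z : ℤ} (h : 1 < |z|) : z ≠ 0 := by
  intro e; rw [e] at h; simp at h

lemma lemCore (ℓ : ℕ) (x b : ℤ) (y : Fin ℓ → ℤ) (hx : 1 < |x|) (hb : b ≠ 0)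
    (hy : ∀ i, 1 < |y i|) (hco : IsCoprime x (b * ∏ i, y i)) :
    ∃ m : ℕ, 0 < m ∧ ∀ (n : ℕ) (k : Fin ℓ → ℕ) (ε : ℤ), (ε = 1 ∨ ε = -1) →
      (m:ℤ) ∣ x ^ n - b * ∏ i, (y i)^(k i) - ε → x ^ n - b * ∏ i, (y i)^(k i) = ε := by
  have hK := fun j => lemK ℓ x b y hx hb hy hco j
  choose s w hspos hwpos hkill using hK
  set Cbox := (Fintype.piFinset fun j : Fin ℓ => Finset.range (s j)).image
    (fun κ => b * ∏ i, (y i)^(κ i)) with hCbox_def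
  set C := Cbox.image (fun z => z + 1) ∪ Cbox.image (fun z => z + (-1)) with hC_def
  obtain ⟨mD, hmDpos, hmD⟩ := lemD x hx C
  refine ⟨(∏ j, w j) * mD, Nat.mul_pos (Finset.prod_pos (fun j _ => hwpos j)) hmDpos, ?_⟩
  intro n k ε hε hdvd
  have hklt : ∀ j, k j < s j := by
    intro j
    apply hkill j n k ε hε
    refine dvd_trans ?_ hdvd
    apply Int.natCast_dvd_natCast.mpr
    exact Dvd.dvd.mul_right (Finset.dvd_prod_of_mem w (Finset.mem_univ j)) mD
  have hmemB : b * ∏ i, (y i)^(k i) ∈ Cbox := by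
    rw [hCbox_def]
    exact Finset.mem_image.mpr ⟨k,
      Fintype.mem_piFinset.mpr (fun j => Finset.mem_range.mpr (hklt j)), rfl⟩
  have hmem : b * ∏ i, (y i)^(k i) + ε ∈ C := by
    rw [hC_def]
    rcases hε with h | h <;> subst h
    · exact Finset.mem_union_left _ (Finset.mem_image.mpr ⟨_, hmemB, rfl⟩)
    · exact Finset.mem_union_right _ (Finset.mem_image.mpr ⟨_, hmemB, rfl⟩)
  have hdvd' : (mD:ℤ) ∣ x^n - (b * ∏ i, (y i)^(k i) + ε) := by
    have h1 : (mD:ℤ) ∣ (((∏ j, w j) * mD : ℕ) : ℤ) :=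
      Int.natCast_dvd_natCast.mpr (dvd_mul_left _ _)
    have h2 : x^n - (b * ∏ i, (y i)^(k i) + ε) = x^n - b * ∏ i, (y i)^(k i) - ε := by ring
    rw [h2]
    exact h1.trans hdvd
  have := hmD n _ hmem hdvd'
  linarith

lemma lemE (x : ℤ) : ∃ m : ℕ, 0 < m ∧ ∀ (n : ℕ) (ε : ℤ), (ε = 1 ∨ ε = -1) →
    ((m:ℤ) ∣ epow x n - ε → epow x n = ε) := by
  by_cases hx0 : x = 0
  · refine ⟨3, by norm_num, ?_⟩
    intro n ε hε h
    subst hx0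
    rw [epow_zero_base] at h ⊢
    exfalso
    rcases hε with h' | h' <;> subst h' <;> omega
  by_cases hx : 1 < |x|
  · obtain ⟨m, hm, hmD⟩ := lemD x hx {1, -1}
    refine ⟨m, hm, fun n ε hε h => ?_⟩
    rw [epow_of_ne x hx0] at h ⊢
    exact hmD n ε (by rcases hε with h' | h' <;> simp [h']) h
  · refine ⟨3, by norm_num, ?_⟩
    intro n ε hε h
    rw [epow_of_ne x hx0] at h ⊢
    have hx1 : x = 1 ∨ x = -1 := by
      have h1 : |x| ≤ 1 := by omega
      have := abs_le.mp h1
      omega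
    have hxn : x^n = 1 ∨ x^n = -1 := by
      rcases hx1 with h' | h'
      · subst h'; left; exact one_pow n
      · subst h'
        rcases Nat.even_or_odd n with he | ho
        · left; exact he.neg_one_pow
        · right; exact ho.neg_one_pow
    rcases hxn with h' | h' <;> rw [h'] at h ⊢ <;> rcases hε with h'' | h'' <;> subst h'' <;> omega

lemma branch_xdeg (ℓ : ℕ) (x b : ℤ) (y : Fin ℓ → ℤ) (hx : x = 0 ∨ x = 1 ∨ x = -1) :
    ∃ m : ℕ, 0 < m ∧ ∀ (n : ℕ) (k : Fin ℓ → ℕ) (ε : ℤ), (ε = 1 ∨ ε = -1) →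
      ((m:ℤ) ∣ epow x n - b * ∏ i, epow (y i) (k i) - ε →
        epow x n - b * ∏ i, epow (y i) (k i) = ε) := by
  obtain ⟨m, hmp, hm⟩ := lemC ℓ b y ({-2, -1, 0, 1, 2} : Finset ℤ)
  refine ⟨m, hmp, ?_⟩
  intro n k ε hε hdvd
  have hu : epow x n = 0 ∨ epow x n = 1 ∨ epow x n = -1 := by
    rcases hx with h | h | h <;> subst h
    · left; exact epow_zero_base n
    · right; left; rw [epow_of_ne _ one_ne_zero]; exact one_pow n
    · rw [epow_of_ne (-1 : ℤ) (by norm_num)]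
      rcases Nat.even_or_odd n with he | ho
      · right; left; exact he.neg_one_pow
      · right; right; exact ho.neg_one_pow
  set u := epow x n with hu_def
  have hc : u - ε ∈ ({-2, -1, 0, 1, 2} : Finset ℤ) := by
    rcases hu with h | h | h <;> rcases hε with h' | h' <;> rw [h, h'] <;> decide
  have hdvd' : (m:ℤ) ∣ b * ∏ i, epow (y i) (k i) - (u - ε) := by
    have h1 : b * ∏ i, epow (y i) (k i) - (u - ε) = -(u - b * ∏ i, epow (y i) (k i) - ε) := by
      ring
    rw [h1]
    exact dvd_neg.mpr hdvd
  have := hm k (u - ε) hc hdvd'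
  linarith

lemma p_dvd_eps_false {p : ℕ} (hp : p.Prime) {ε : ℤ} (hε : ε = 1 ∨ ε = -1)
    (h : (p:ℤ) ∣ ε) : False := by
  have h2 : (2:ℤ) ≤ p := by exact_mod_cast hp.two_le
  rcases hε with h' | h'
  · subst h'; have := Int.le_of_dvd one_pos h; omega
  · subst h'
    rw [dvd_neg] at h
    have := Int.le_of_dvd one_pos h; omega

lemma branch_b0 (ℓ : ℕ) (x : ℤ) (y : Fin ℓ → ℤ) :
    ∃ m : ℕ, 0 < m ∧ ∀ (n : ℕ) (k : Fin ℓ → ℕ) (ε : ℤ), (ε = 1 ∨ ε = -1) →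
      ((m:ℤ) ∣ epow x n - 0 * ∏ i, epow (y i) (k i) - ε →
        epow x n - 0 * ∏ i, epow (y i) (k i) = ε) := by
  obtain ⟨m, hmp, hm⟩ := lemE x
  refine ⟨m, hmp, ?_⟩
  intro n k ε hε hdvd
  rw [zero_mul, sub_zero] at hdvd ⊢
  exact hm n ε hε hdvd

lemma branch_yzero (ℓ : ℕ) (x b : ℤ) (y : Fin ℓ → ℤ) (i0 : Fin ℓ) (hi0 : y i0 = 0) :
    ∃ m : ℕ, 0 < m ∧ ∀ (n : ℕ) (k : Fin ℓ → ℕ) (ε : ℤ), (ε = 1 ∨ ε = -1) →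
      ((m:ℤ) ∣ epow x n - b * ∏ i, epow (y i) (k i) - ε →
        epow x n - b * ∏ i, epow (y i) (k i) = ε) := by
  obtain ⟨m, hmp, hm⟩ := lemE x
  refine ⟨m, hmp, ?_⟩
  intro n k ε hε hdvd
  have hP : (∏ i, epow (y i) (k i)) = 0 :=
    Finset.prod_eq_zero (Finset.mem_univ i0) (by rw [hi0]; exact epow_zero_base _)
  rw [hP, mul_zero, sub_zero] at hdvd ⊢
  exact hm n ε hε hdvd

lemma branch_sit1a (ℓ : ℕ) (x b : ℤ) (y : Fin ℓ → ℤ) (hx0 : x ≠ 0)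
    (p : ℕ) (hp : p.Prime) (hpx : (p:ℤ) ∣ x) (hpb : (p:ℤ) ∣ b) :
    ∃ m : ℕ, 0 < m ∧ ∀ (n : ℕ) (k : Fin ℓ → ℕ) (ε : ℤ), (ε = 1 ∨ ε = -1) →
      ((m:ℤ) ∣ epow x n - b * ∏ i, epow (y i) (k i) - ε →
        epow x n - b * ∏ i, epow (y i) (k i) = ε) := by
  obtain ⟨mC, hmCp, hmC⟩ := lemC ℓ b y ({0, 2} : Finset ℤ)
  refine ⟨p * mC, Nat.mul_pos hp.pos hmCp, ?_⟩
  intro n k ε hε hdvd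
  by_cases hn : n = 0
  · subst hn
    rw [epow_of_ne x hx0, pow_zero] at hdvd ⊢
    have hc : (1:ℤ) - ε ∈ ({0, 2} : Finset ℤ) := by
      rcases hε with h | h <;> subst h <;> decide
    have hdvd' : (mC:ℤ) ∣ b * ∏ i, epow (y i) (k i) - (1 - ε) := by
      have h1 : b * ∏ i, epow (y i) (k i) - (1 - ε)
          = -(1 - b * ∏ i, epow (y i) (k i) - ε) := by ring
      rw [h1]
      refine dvd_neg.mpr (dvd_trans ?_ hdvd)
      exact Int.natCast_dvd_natCast.mpr (dvd_mul_left mC p)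
    have := hmC k _ hc hdvd'
    linarith
  · exfalso
    have h1 : (p:ℤ) ∣ epow x n := by rw [epow_of_ne x hx0]; exact dvd_pow hpx hn
    have h2 : (p:ℤ) ∣ b * ∏ i, epow (y i) (k i) := hpb.mul_right _
    have hdvd' : (p:ℤ) ∣ epow x n - b * ∏ i, epow (y i) (k i) - ε := by
      refine dvd_trans ?_ hdvd
      exact Int.natCast_dvd_natCast.mpr (dvd_mul_right p mC)
    have h4 : (p:ℤ) ∣ ε := by
      have h5 : ε = (epow x n - b * ∏ i, epow (y i) (k i))
          - (epow x n - b * ∏ i, epow (y i) (k i) - ε) := by ring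
      rw [h5]
      exact dvd_sub (dvd_sub h1 h2) hdvd'
    exact p_dvd_eps_false hp hε h4

lemma branch_core (ℓ : ℕ) (x b : ℤ) (y : Fin ℓ → ℤ) (hx : 1 < |x|) (hb : b ≠ 0)
    (hy : ∀ i, 1 < |y i|) (hco : IsCoprime x (b * ∏ i, y i)) :
    ∃ m : ℕ, 0 < m ∧ ∀ (n : ℕ) (k : Fin ℓ → ℕ) (ε : ℤ), (ε = 1 ∨ ε = -1) →
      ((m:ℤ) ∣ epow x n - b * ∏ i, epow (y i) (k i) - ε →
        epow x n - b * ∏ i, epow (y i) (k i) = ε) := by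
  obtain ⟨m, hmp, hm⟩ := lemCore ℓ x b y hx hb hy hco
  refine ⟨m, hmp, ?_⟩
  intro n k ε hε hdvd
  have hrw : (∏ i, epow (y i) (k i)) = ∏ i, (y i)^(k i) :=
    Finset.prod_congr rfl (fun i _ => epow_of_ne _ (ne_zero_of_abs (hy i)) _)
  rw [epow_of_ne x (ne_zero_of_abs hx), hrw] at hdvd ⊢
  exact hm n k ε hε hdvd

lemma tail_shared (ℓ : ℕ) (x b : ℤ) (y : Fin ℓ → ℤ) (hy2 : ∀ i, 1 < |y i|)
    (hsit1b : 1 < |x| → b ≠ 0 →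
      (∃ p : ℕ, ∃ j : Fin ℓ, p.Prime ∧ (p:ℤ) ∣ x ∧ (p:ℤ) ∣ y j) →
      ∃ m : ℕ, 0 < m ∧ ∀ (n : ℕ) (k : Fin ℓ → ℕ) (ε : ℤ), (ε = 1 ∨ ε = -1) →
        ((m:ℤ) ∣ epow x n - b * ∏ i, epow (y i) (k i) - ε →
          epow x n - b * ∏ i, epow (y i) (k i) = ε)) :
    ∃ m : ℕ, 0 < m ∧ ∀ (n : ℕ) (k : Fin ℓ → ℕ) (ε : ℤ), (ε = 1 ∨ ε = -1) →
      ((m:ℤ) ∣ epow x n - b * ∏ i, epow (y i) (k i) - ε →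
        epow x n - b * ∏ i, epow (y i) (k i) = ε) := by
  by_cases hx1 : 1 < |x|
  swap
  · refine branch_xdeg ℓ x b y ?_
    have h1 : |x| ≤ 1 := by omega
    have := abs_le.mp h1
    omega
  by_cases hb : b = 0
  · subst hb; exact branch_b0 ℓ x y
  by_cases hpb : ∃ p : ℕ, p.Prime ∧ (p:ℤ) ∣ x ∧ (p:ℤ) ∣ b
  · obtain ⟨p, hp, hpx, hpbd⟩ := hpb
    exact branch_sit1a ℓ x b y (ne_zero_of_abs hx1) p hp hpx hpbd
  by_cases hpy : ∃ p : ℕ, ∃ j : Fin ℓ, p.Prime ∧ (p:ℤ) ∣ x ∧ (p:ℤ) ∣ y j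
  · exact hsit1b hx1 hb hpy
  · have hx0 : x ≠ 0 := ne_zero_of_abs hx1
    have hco : IsCoprime x (b * ∏ i, y i) := by
      rw [Int.isCoprime_iff_gcd_eq_one]
      by_contra hg
      have hg0 : Int.gcd x (b * ∏ i, y i) ≠ 0 := fun h => hx0 (Int.gcd_eq_zero_iff.mp h).1
      set g := Int.gcd x (b * ∏ i, y i) with hg_def
      have hp : g.minFac.Prime := Nat.minFac_prime (by omega)
      have hpg : ((g.minFac : ℕ) : ℤ) ∣ (g : ℤ) := Int.natCast_dvd_natCast.mpr (Nat.minFac_dvd g)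
      have hpx : ((g.minFac : ℕ) : ℤ) ∣ x := hpg.trans (Int.gcd_dvd_left _ _)
      have hpby : ((g.minFac : ℕ) : ℤ) ∣ b * ∏ i, y i := hpg.trans (Int.gcd_dvd_right _ _)
      rcases (int_prime _ hp).dvd_mul.mp hpby with h | h
      · exact hpb ⟨g.minFac, hp, hpx, h⟩
      · obtain ⟨j, -, hj⟩ := (int_prime _ hp).exists_mem_finset_dvd h
        exact hpy ⟨g.minFac, j, hp, hpx, hj⟩
    exact branch_core ℓ x b y hx1 hb hy2 hco

lemma lemTail : ∀ (ℓ : ℕ) (x b : ℤ) (y : Fin ℓ → ℤ), (∀ i, 1 < |y i|) →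
    ∃ m : ℕ, 0 < m ∧ ∀ (n : ℕ) (k : Fin ℓ → ℕ) (ε : ℤ), (ε = 1 ∨ ε = -1) →
      ((m:ℤ) ∣ epow x n - b * ∏ i, epow (y i) (k i) - ε →
        epow x n - b * ∏ i, epow (y i) (k i) = ε) := by
  intro ℓ
  induction ℓ with
  | zero =>
    intro x b y hy2
    exact tail_shared 0 x b y hy2 (fun _ _ h => absurd h (by rintro ⟨p, j, -⟩; exact j.elim0))
  | succ L IH =>
    intro x b y hy2
    refine tail_shared (L+1) x b y hy2 ?_
    rintro hx1 hb ⟨p, j, hp, hpx, hpyj⟩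
    have hx0 : x ≠ 0 := ne_zero_of_abs hx1
    obtain ⟨mC, hmCp, hmC⟩ := lemC (L+1) b y ({0, 2} : Finset ℤ)
    obtain ⟨mI, hmIp, hmI⟩ := IH x b (fun t => y (j.succAbove t)) (fun t => hy2 _)
    refine ⟨p * mC * mI, Nat.mul_pos (Nat.mul_pos hp.pos hmCp) hmIp, ?_⟩
    intro n k ε hε hdvd
    by_cases hn : n = 0
    · subst hn
      rw [epow_of_ne x hx0, pow_zero] at hdvd ⊢
      have hc : (1:ℤ) - ε ∈ ({0, 2} : Finset ℤ) := by
        rcases hε with h | h <;> subst h <;> decide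
      have hdvd' : (mC:ℤ) ∣ b * ∏ i, epow (y i) (k i) - (1 - ε) := by
        have h1 : b * ∏ i, epow (y i) (k i) - (1 - ε)
            = -(1 - b * ∏ i, epow (y i) (k i) - ε) := by ring
        rw [h1]
        refine dvd_neg.mpr (dvd_trans ?_ hdvd)
        exact Int.natCast_dvd_natCast.mpr ⟨p * mI, by ring⟩
      have := hmC k _ hc hdvd'
      linarith
    by_cases hkj : k j = 0
    · have hsplit : (∏ i, epow (y i) (k i))
          = epow (y j) (k j) * ∏ t : Fin L, epow (y (j.succAbove t)) (k (j.succAbove t)) :=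
        Fin.prod_univ_succAbove (fun i => epow (y i) (k i)) j
      have h1 : epow (y j) (k j) = 1 := by
        rw [hkj, epow_of_ne _ (ne_zero_of_abs (hy2 j)), pow_zero]
      rw [hsplit, h1, one_mul] at hdvd ⊢
      refine hmI n (fun t => k (j.succAbove t)) ε hε (dvd_trans ?_ hdvd)
      exact Int.natCast_dvd_natCast.mpr ⟨p * mC, by ring⟩
    · exfalso
      have h1 : (p:ℤ) ∣ epow x n := by rw [epow_of_ne x hx0]; exact dvd_pow hpx hn
      have h2 : (p:ℤ) ∣ b * ∏ i, epow (y i) (k i) := by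
        have h3 : (p:ℤ) ∣ epow (y j) (k j) := by
          rw [epow_of_ne _ (ne_zero_of_abs (hy2 j))]
          exact dvd_pow hpyj hkj
        exact (h3.trans (Finset.dvd_prod_of_mem (fun i => epow (y i) (k i))
          (Finset.mem_univ j))).mul_left b
      have hdvd' : (p:ℤ) ∣ epow x n - b * ∏ i, epow (y i) (k i) - ε := by
        refine dvd_trans ?_ hdvd
        exact Int.natCast_dvd_natCast.mpr ⟨mC * mI, by ring⟩
      have h4 : (p:ℤ) ∣ ε := by
        have h5 : ε = (epow x n - b * ∏ i, epow (y i) (k i))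
            - (epow x n - b * ∏ i, epow (y i) (k i) - ε) := by ring
        rw [h5]
        exact dvd_sub (dvd_sub h1 h2) hdvd'
      exact p_dvd_eps_false hp hε h4

lemma main_aux : ∀ (ℓ : ℕ) (x b : ℤ) (y : Fin ℓ → ℤ),
    ∃ m : ℕ, 0 < m ∧ ∀ (n : ℕ) (k : Fin ℓ → ℕ) (ε : ℤ), (ε = 1 ∨ ε = -1) →
      ((m:ℤ) ∣ epow x n - b * ∏ i, epow (y i) (k i) - ε →
        epow x n - b * ∏ i, epow (y i) (k i) = ε) := by
  intro ℓ
  induction ℓ with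
  | zero =>
    intro x b y
    exact lemTail 0 x b y (fun i => i.elim0)
  | succ L IH =>
    intro x b y
    by_cases hz : ∃ i, y i = 0
    · obtain ⟨i0, hi0⟩ := hz
      exact branch_yzero (L+1) x b y i0 hi0
    push_neg at hz
    by_cases h1 : ∃ i, y i = 1 ∨ y i = -1
    · obtain ⟨i0, hi0⟩ := h1
      obtain ⟨m1, hm1p, hm1⟩ := IH x b (fun t => y (i0.succAbove t))
      obtain ⟨m2, hm2p, hm2⟩ := IH x (-b) (fun t => y (i0.succAbove t))
      refine ⟨m1 * m2, Nat.mul_pos hm1p hm2p, ?_⟩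
      intro n k ε hε hdvd
      have hsplit : (∏ i, epow (y i) (k i))
          = epow (y i0) (k i0) * ∏ t : Fin L, epow (y (i0.succAbove t)) (k (i0.succAbove t)) :=
        Fin.prod_univ_succAbove (fun i => epow (y i) (k i)) i0
      have hval : epow (y i0) (k i0) = 1 ∨ epow (y i0) (k i0) = -1 := by
        rw [epow_of_ne _ (hz i0)]
        rcases hi0 with h | h <;> rw [h]
        · left; exact one_pow _
        · rcases Nat.even_or_odd (k i0) with he | ho
          · left; exact he.neg_one_pow
          · right; exact ho.neg_one_pow
      rcases hval with h | h
      · rw [hsplit, h, one_mul] at hdvd ⊢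
        refine hm1 n (fun t => k (i0.succAbove t)) ε hε (dvd_trans ?_ hdvd)
        exact Int.natCast_dvd_natCast.mpr (dvd_mul_right m1 m2)
      · rw [hsplit, h] at hdvd ⊢
        have e : b * (-1 * ∏ t : Fin L, epow (y (i0.succAbove t)) (k (i0.succAbove t)))
            = (-b) * ∏ t : Fin L, epow (y (i0.succAbove t)) (k (i0.succAbove t)) := by ring
        rw [e] at hdvd ⊢
        refine hm2 n (fun t => k (i0.succAbove t)) ε hε (dvd_trans ?_ hdvd)
        exact Int.natCast_dvd_natCast.mpr (dvd_mul_left m2 m1)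
    · push_neg at h1
      refine lemTail (L+1) x b y ?_
      intro i
      exact abs_gt_one (y i) (hz i) (h1 i).1 (h1 i).2

theorem skolem_main (ℓ : ℕ) (b x : ℤ) (y : Fin ℓ → ℤ) :
    ∃ m : ℕ, 0 < m ∧
      ∀ (n : ℕ) (k : Fin ℓ → ℕ) (ε : ℤ), ε = 1 ∨ ε = -1 →
        ((m : ℤ) ∣ epow x n - b * ∏ i, epow (y i) (k i) - ε ↔
          epow x n - b * ∏ i, epow (y i) (k i) = ε) := by
  obtain ⟨m, hmp, hm⟩ := main_aux ℓ x b y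
  refine ⟨m, hmp, ?_⟩
  intro n k ε hε
  constructor
  · exact hm n k ε hε
  · intro h
    rw [h]
    simp
end
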